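/- arXiv:math/0411498 — 8 statements merged into one kernel-verified Lean document; each statement's English description precedes it below -/
import Mathlib

section
/- For every even positive integer n, the Bernoulli number B_n plus the sum of 1/p over all primes p with (p-1) | n is an integer. -/
theorem clausen_von_staudt_general (n : ℕ) (he : Even n) :
    ∃ z : ℤ, bernoulli n +
      ∑ p ∈ (Finset.range (n + 2)).filter (fun p => p.Prime ∧ (p - 1) ∣ n),
        (1 : ℚ) / p = z := by
  obtain ⟨k, rfl⟩ := he
  rw [← two_mul]
  obtain ⟨z, hz⟩ := Bernoulli.vonStaudt_clausen k
  exact ⟨z, hz.symm⟩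

/-- Clausen–von Staudt: for even positive `n`, `B_n + ∑_{p-1 ∣ n} 1/p` is an integer. -/
theorem clausen_von_staudt (n : ℕ) (hn : 0 < n) (he : Even n) :
    ∃ z : ℤ, bernoulli n +
      ∑ p ∈ (Finset.range (n + 2)).filter (fun p => p.Prime ∧ (p - 1) ∣ n),
        (1 : ℚ) / p = z :=
  clausen_von_staudt_general n he
end

section
/- For every even positive integer n, the denominator of the Bernoulli number B_n (in lowest terms) equals the product of all primes p with (p-1) | n. -/
/-!
By von Staudt–Clausen (`Bernoulli.vonStaudt_clausen`), `B_n + ∑ 1/p` over the primes with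
`(p - 1) ∣ n` is an integer, so `B_n` has the denominator of that sum of reciprocals of distinct
primes. When the denominators of two rationals are coprime, the denominator of their sum is their
product, so that denominator is the product of the primes.
-/

open Finset

theorem Rat.den_add_of_coprime {q r : ℚ} (h : q.den.Coprime r.den) :
    (q + r).den = q.den * r.den := by
  have hq : q.den ∣ (q + r).den * r.den := by simpa using Rat.sub_den_dvd (q + r) r
  have hr : r.den ∣ (q + r).den * q.den := by simpa using Rat.sub_den_dvd (q + r) q
  exact Nat.dvd_antisymm (Rat.add_den_dvd q r)
    (h.mul_dvd_of_dvd_of_dvd (h.dvd_of_dvd_mul_right hq) (h.symm.dvd_of_dvd_mul_right hr))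

theorem Rat.den_sum_one_div_of_pairwise_coprime {s : Finset ℕ} (h0 : ∀ a ∈ s, a ≠ 0)
    (hs : (s : Set ℕ).Pairwise Nat.Coprime) :
    (∑ a ∈ s, (1 : ℚ) / a).den = ∏ a ∈ s, a := by
  induction s using Finset.induction_on with
  | empty => simp
  | insert a s ha ih =>
    rw [coe_insert, Set.pairwise_insert_of_notMem (mod_cast ha)] at hs
    have hden : ((1 : ℚ) / a).den = a := by
      rw [one_div, Rat.inv_natCast_den_of_pos (Nat.pos_of_ne_zero (h0 a (mem_insert_self a s)))]
    have hsum : (∑ b ∈ s, (1 : ℚ) / b).den = ∏ b ∈ s, b :=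
      ih (fun b hb => h0 b (mem_insert_of_mem hb)) hs.1
    have hcop : a.Coprime (∏ b ∈ s, b) :=
      Nat.Coprime.prod_right fun b hb => (hs.2 b hb).1
    rw [sum_insert ha, prod_insert ha, Rat.den_add_of_coprime (by rwa [hden, hsum]), hden, hsum]

theorem bernoulli_den_eq_prod_general (n : ℕ) (he : Even n) :
    (bernoulli n).den =
      ∏ p ∈ (Finset.range (n + 2)).filter (fun p => p.Prime ∧ (p - 1) ∣ n), p := by
  obtain ⟨k, rfl⟩ := he.two_dvd
  obtain ⟨z, hz⟩ := Bernoulli.vonStaudt_clausen k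
  rw [eq_sub_of_add_eq hz.symm, Rat.intCast_sub_den]
  refine Rat.den_sum_one_div_of_pairwise_coprime (fun p hp => (mem_filter.mp hp).2.1.ne_zero) ?_
  intro p hp q hq hpq
  exact (Nat.coprime_primes (mem_filter.mp hp).2.1 (mem_filter.mp hq).2.1).mpr hpq

/-- Clausen–von Staudt, denominator form. -/
theorem bernoulli_den_eq_prod (n : ℕ) (hn : 0 < n) (he : Even n) :
    (bernoulli n).den =
      ∏ p ∈ (Finset.range (n + 2)).filter (fun p => p.Prime ∧ (p - 1) ∣ n), p :=
  bernoulli_den_eq_prod_general n he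
end

section
/- For every even positive integer n, the denominator of B_n is squarefree. -/
open Finset

/-- `v_p(m) < m`, so `padicNorm p (p^m / m) ≤ p⁻¹` for `m ≥ 1`. -/
lemma padicNorm_pow_div_le (p : ℕ) [hp : Fact p.Prime] (m : ℕ) (hm : 0 < m) :
    padicNorm p ((p : ℚ) ^ m / m) ≤ ((p : ℚ))⁻¹ := by
  have hp1 : (1 : ℚ) < p := by exact_mod_cast hp.out.one_lt
  have hp0 : (0 : ℚ) < p := lt_trans one_pos hp1
  have hmQ : (m : ℚ) ≠ 0 := by exact_mod_cast hm.ne'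
  have hv : padicValNat p m < m := by
    by_contra h
    push_neg at h
    have hd : p ^ m ∣ m := dvd_trans (pow_dvd_pow p h) pow_padicValNat_dvd
    have := Nat.le_of_dvd hm hd
    exact absurd this (not_le.mpr (Nat.lt_pow_self (n := m) hp.out.one_lt))
  have hnum : padicNorm p ((p : ℚ) ^ m) = (p : ℚ) ^ (-(m : ℤ)) := by
    have hpm : ((p : ℚ) ^ m) ≠ 0 := by positivity
    rw [padicNorm.eq_zpow_of_nonzero hpm, padicValRat.pow (p : ℚ),
      padicValRat.self hp.out.one_lt]
    simp
  have hden : padicNorm p (m : ℚ) = (p : ℚ) ^ (-(padicValNat p m : ℤ)) := by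
    rw [padicNorm.eq_zpow_of_nonzero hmQ, padicValRat.of_nat]
  rw [padicNorm.div, hnum, hden, ← zpow_sub₀ (ne_of_gt hp0)]
  calc (p : ℚ) ^ (-(m : ℤ) - -(padicValNat p m : ℤ))
      ≤ (p : ℚ) ^ (-1 : ℤ) := by
        apply zpow_le_zpow_right₀ (le_of_lt hp1)
        omega
    _ = ((p : ℚ))⁻¹ := by simp

/-- Key claim (the `p`-integrality part of von Staudt–Clausen):
`padicNorm p (bernoulli n) ≤ p` for all `n`. -/
lemma padicNorm_bernoulli_le (p : ℕ) [hp : Fact p.Prime] (n : ℕ) :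
    padicNorm p (bernoulli n) ≤ p := by
  induction n using Nat.strong_induction_on with
  | _ n ih =>
    have hp1 : (1 : ℚ) < p := by exact_mod_cast hp.out.one_lt
    have hp0 : (0 : ℚ) < p := lt_trans one_pos hp1
    have hn1 : ((n : ℚ) + 1) ≠ 0 := by positivity
    -- Faulhaber identity with `p` terms
    have hF := sum_range_pow p n
    rw [Finset.sum_range_succ] at hF
    have hlast : bernoulli n * ((n + 1).choose n) * (p : ℚ) ^ (n + 1 - n) / (n + 1) =
        bernoulli n * p := by
      rw [Nat.choose_succ_self_right]
      have : n + 1 - n = 1 := by omega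
      rw [this]
      push_cast
      field_simp
    rw [hlast] at hF
    have key : bernoulli n * p = (∑ k ∈ range p, (k : ℚ) ^ n) -
        ∑ i ∈ range n, bernoulli i * ((n + 1).choose i) * (p : ℚ) ^ (n + 1 - i) / (n + 1) := by
      rw [hF]; ring
    have hkey : padicNorm p (bernoulli n * p) ≤ 1 := by
      rw [key]
      refine le_trans padicNorm.sub (max_le ?_ ?_)
      · -- the sum of powers is a natural number
        have : (∑ k ∈ range p, (k : ℚ) ^ n) = ((∑ k ∈ range p, k ^ n : ℕ) : ℚ) := by
          push_cast; ring
        rw [this]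
        have h := padicNorm.of_int (p := p) ((∑ k ∈ range p, k ^ n : ℕ) : ℤ)
        simpa using h
      · refine padicNorm.sum_le' (fun i hi => ?_) zero_le_one
        have hin : i < n := Finset.mem_range.mp hi
        set m : ℕ := n + 1 - i with hm
        have hm2 : 2 ≤ m := by omega
        have hmQ : (m : ℚ) ≠ 0 := by
          have : 0 < m := by omega
          exact_mod_cast this.ne'
        -- rewrite the term using `choose_mul_succ_eq`
        have hterm : bernoulli i * ((n + 1).choose i) * (p : ℚ) ^ m / (n + 1) =
            bernoulli i * (n.choose i) * ((p : ℚ) ^ m / m) := by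
          have hc : (n.choose i : ℚ) * (n + 1) = ((n + 1).choose i : ℚ) * m := by
            have := Nat.choose_mul_succ_eq n i
            have h2 : (n.choose i * (n + 1) : ℕ) = ((n + 1).choose i * m : ℕ) := by
              rw [this]
            exact_mod_cast h2
          field_simp
          linear_combination (-1 : ℚ) * bernoulli i * hc
        rw [hterm, padicNorm.mul, padicNorm.mul]
        have h1 : padicNorm p (bernoulli i) ≤ p := ih i hin
        have h2 : padicNorm p ((n.choose i : ℚ)) ≤ 1 := by
          have h := padicNorm.of_int (p := p) ((n.choose i : ℕ) : ℤ)
          simpa using h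
        have h3 : padicNorm p ((p : ℚ) ^ m / m) ≤ ((p : ℚ))⁻¹ :=
          padicNorm_pow_div_le p m (by omega)
        calc padicNorm p (bernoulli i) * padicNorm p ((n.choose i : ℚ)) *
              padicNorm p ((p : ℚ) ^ m / m)
            ≤ (p : ℚ) * 1 * ((p : ℚ))⁻¹ := by
              gcongr <;> first | exact padicNorm.nonneg _ | positivity
          _ = 1 := by field_simp
    rw [padicNorm.mul, padicNorm.padicNorm_p_of_prime] at hkey
    calc padicNorm p (bernoulli n)
        = padicNorm p (bernoulli n) * (p : ℚ)⁻¹ * p := by field_simp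
      _ ≤ 1 * p := by gcongr
      _ = p := one_mul _

/-- The denominator of `B_n` is squarefree for even positive `n`. -/
theorem bernoulli_den_squarefree (n : ℕ) (hn : 0 < n) (he : Even n) :
    Squarefree (bernoulli n).den := by
  rw [Nat.squarefree_iff_prime_squarefree]
  intro p hpp hdvd
  haveI : Fact p.Prime := ⟨hpp⟩
  set q : ℚ := bernoulli n with hq
  have hq0 : q ≠ 0 := by
    intro h
    rw [h] at hdvd
    simp only [Rat.den_ofNat, Nat.dvd_one] at hdvd
    have := hpp.one_lt
    nlinarith [hdvd]
  have hden0 : q.den ≠ 0 := q.den_nz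
  -- padicValNat p q.den ≥ 2
  have hval2 : 2 ≤ padicValNat p q.den := by
    rw [← padicValNat_dvd_iff_le hden0]
    rwa [pow_two]
  -- p does not divide the numerator
  have hnum : padicValInt p q.num = 0 := by
    apply padicValInt.eq_zero_of_not_dvd
    intro hd
    have hd' : p ∣ q.num.natAbs := by
      have := Int.natAbs_dvd_natAbs.mpr hd
      simpa using this
    have hdq : p ∣ q.den := dvd_trans (dvd_mul_left p p) hdvd
    have : p ∣ Nat.gcd q.num.natAbs q.den := Nat.dvd_gcd hd' hdq
    rw [q.reduced] at this
    exact hpp.one_lt.ne' (Nat.dvd_one.mp this)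
  have hvr : padicValRat p q = -(padicValNat p q.den : ℤ) := by
    rw [padicValRat, hnum]; ring
  have hnorm : padicNorm p q = (p : ℚ) ^ ((padicValNat p q.den : ℤ)) := by
    rw [padicNorm.eq_zpow_of_nonzero hq0, hvr, neg_neg]
  have hle : padicNorm p q ≤ p := padicNorm_bernoulli_le p n
  have hp1 : (1 : ℚ) < p := by exact_mod_cast hpp.one_lt
  have : (p : ℚ) ^ ((padicValNat p q.den : ℤ)) ≤ (p : ℚ) ^ (1 : ℤ) := by
    rw [← hnorm, zpow_one]; exact hle
  have h12 : ((padicValNat p q.den : ℤ)) ≤ 1 := (zpow_le_zpow_iff_right₀ hp1).mp this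
  omega
end

section
/- Let n be an even positive integer and p a prime with (p-1) ∤ n. Then B_n/n is a p-integer, i.e., the p-adic valuation of B_n/n is nonnegative. -/
open Finset

lemma binom_aux (n : ℕ) (x y : ℤ) :
    ∃ e : ℤ, (x - y)^n = x^n - n * x^(n-1) * y + y^2 * e := by
  induction n with
  | zero => exact ⟨0, by norm_num⟩
  | succ n ih =>
    obtain ⟨e, he⟩ := ih
    refine ⟨n * x^(n-1) + e * (x - y), ?_⟩
    have hx : (n : ℤ) * x^(n-1) * x = n * x^n := by
      cases n with
      | zero => simp
      | succ k => simp [pow_succ]; ring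
    calc (x - y)^(n+1) = (x^n - n * x^(n-1) * y + y^2 * e) * (x - y) := by rw [← he]; ring
    _ = x^(n+1) - (n * x^(n-1) * x) * y - x^n * y + y^2 * (n * x^(n-1) + e * (x-y)) := by ring
    _ = _ := by rw [hx]; push_cast; ring

lemma perm_sum (m a : ℕ) (hm : 1 < m) (ha : Nat.Coprime a m) (f : ℕ → ℤ) :
    ∑ j ∈ range m, f ((j * a) % m) = ∑ j ∈ range m, f j := by
  obtain ⟨b, -, hb⟩ := Nat.exists_mul_mod_eq_one_of_coprime ha hm
  have hinv : ∀ x < m, (x * a) % m * b % m = x := by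
    intro x hx
    rw [Nat.mod_mul_mod, mul_assoc, Nat.mul_mod, hb, mul_one, Nat.mod_mod_of_dvd _ dvd_rfl,
      Nat.mod_eq_of_lt hx]
  have hinv' : ∀ x < m, (x * b) % m * a % m = x := by
    intro x hx
    rw [Nat.mod_mul_mod, mul_assoc, mul_comm b a, Nat.mul_mod, hb, mul_one,
      Nat.mod_mod_of_dvd _ dvd_rfl, Nat.mod_eq_of_lt hx]
  refine Finset.sum_nbij' (i := fun j => (j * a) % m) (j := fun j => (j * b) % m) ?_ ?_ ?_ ?_ ?_
  · intro x hx; exact mem_range.mpr (Nat.mod_lt _ (by omega))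
  · intro x hx; exact mem_range.mpr (Nat.mod_lt _ (by omega))
  · intro x hx; exact hinv x (mem_range.mp hx)
  · intro x hx; exact hinv' x (mem_range.mp hx)
  · intro x hx; rfl

lemma voronoi (n m a : ℕ) (hn : 1 ≤ n) (hm : 1 < m) (ha : Nat.Coprime a m) :
    ∃ c d : ℤ, ((a:ℤ)^n - 1) * ∑ j ∈ range m, (j:ℤ)^n = n * m * c + m^2 * d := by
  choose e he using fun (j : ℕ) => binom_aux n ((j:ℤ)*a) ((m:ℤ) * ((j * a / m : ℕ) : ℤ))
  refine ⟨∑ j ∈ range m, ((j:ℤ)*a)^(n-1) * ((j * a / m : ℕ) : ℤ),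
          -∑ j ∈ range m, (((j * a / m : ℕ) : ℤ))^2 * e j, ?_⟩
  have hterm : ∀ j : ℕ, (((j * a) % m : ℕ) : ℤ)^n
      = ((j:ℤ)*a)^n - n*((j:ℤ)*a)^(n-1)*((m:ℤ)*((j * a / m : ℕ) : ℤ))
        + ((m:ℤ)*((j * a / m : ℕ) : ℤ))^2 * e j := by
    intro j
    rw [← he j]
    congr 1
    have h := Nat.mod_add_div (j * a) m
    have hcast : ((j*a : ℕ) : ℤ) = (j:ℤ)*a := by push_cast; ring
    omega
  have key := perm_sum m a hm ha (fun r => (r:ℤ)^n)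
  simp only [hterm] at key
  rw [Finset.sum_add_distrib, Finset.sum_sub_distrib] at key
  have h1 : ∑ j ∈ range m, ((j:ℤ)*a)^n = (a:ℤ)^n * ∑ j ∈ range m, (j:ℤ)^n := by
    rw [Finset.mul_sum]; exact Finset.sum_congr rfl fun j _ => by ring
  rw [h1] at key
  have h2 : ∑ j ∈ range m, (n:ℤ)*((j:ℤ)*a)^(n-1)*((m:ℤ)*((j * a / m : ℕ) : ℤ))
      = (n:ℤ) * m * ∑ j ∈ range m, ((j:ℤ)*a)^(n-1) * ((j * a / m : ℕ) : ℤ) := by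
    rw [Finset.mul_sum]; exact Finset.sum_congr rfl fun j _ => by ring
  have h3 : ∑ j ∈ range m, ((m:ℤ)*((j * a / m : ℕ) : ℤ))^2 * e j
      = (m:ℤ)^2 * ∑ j ∈ range m, (((j * a / m : ℕ) : ℤ))^2 * e j := by
    rw [Finset.mul_sum]; exact Finset.sum_congr rfl fun j _ => by ring
  rw [h2, h3] at key
  linarith [key]


variable {p : ℕ} [hp : Fact p.Prime]

lemma norm_nat_eq (s : ℕ) (hs : 0 < s) :
    ‖((s : ℚ_[p]))‖ = (p:ℝ) ^ (-(padicValNat p s : ℤ)) := by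
  have h := Nat.ordProj_mul_ordCompl_eq_self s p
  rw [Nat.factorization_def _ hp.out] at h
  have hu : ¬ (p:ℤ) ∣ (↑(s / p ^ padicValNat p s) : ℤ) := by
    rw [Int.natCast_dvd_natCast]
    have := Nat.not_dvd_ordCompl hp.out hs.ne'
    rwa [Nat.factorization_def _ hp.out] at this
  have hu1 : ‖((s / p ^ padicValNat p s : ℕ) : ℚ_[p])‖ = 1 := by
    apply le_antisymm
    · exact_mod_cast Padic.norm_int_le_one _
    · by_contra hlt
      push_neg at hlt
      have := Padic.norm_intCast_lt_one_iff.mp (by exact_mod_cast hlt)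
      exact hu this
  calc ‖((s : ℚ_[p]))‖ = ‖((p ^ padicValNat p s * (s / p ^ padicValNat p s) : ℕ) : ℚ_[p])‖ := by
        rw [h]
  _ = ‖((p:ℚ_[p]))‖ ^ (padicValNat p s) * 1 := by push_cast; rw [norm_mul, norm_pow, hu1]
  _ = (p:ℝ) ^ (-(padicValNat p s : ℤ)) := by
        rw [Padic.norm_p, mul_one, zpow_neg, zpow_natCast, inv_pow]

lemma padicValNat_lt (s : ℕ) (hs : 0 < s) : padicValNat p s < s := by
  have hd : p ^ padicValNat p s ∣ s := pow_padicValNat_dvd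
  have h1 : p ^ padicValNat p s ≤ s := Nat.le_of_dvd hs hd
  have h2 : padicValNat p s < 2 ^ padicValNat p s := Nat.lt_two_pow_self
  have h3 : 2 ^ padicValNat p s ≤ p ^ padicValNat p s :=
    Nat.pow_le_pow_left hp.out.two_le _
  omega

lemma norm_inv_nat_le (s : ℕ) (hs : 0 < s) :
    ‖((s : ℚ_[p]))⁻¹‖ ≤ (p:ℝ) ^ (s - 1) := by
  rw [norm_inv, norm_nat_eq s hs, ← zpow_neg, neg_neg]
  have hple : (1:ℝ) ≤ p := by exact_mod_cast hp.out.one_le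
  calc (p:ℝ) ^ ((padicValNat p s : ℤ)) ≤ (p:ℝ) ^ ((s-1 : ℕ) : ℤ) := by
        apply zpow_le_zpow_right₀ hple
        have := padicValNat_lt (p := p) s hs
        omega
  _ = (p:ℝ) ^ (s-1) := by rw [zpow_natCast]

lemma norm_nat_le_one (k : ℕ) : ‖((k : ℚ_[p]))‖ ≤ 1 := by
  have := Padic.norm_int_le_one (p := p) (k : ℤ)
  rwa [Int.cast_natCast] at this

lemma norm_bernoulli_le (i : ℕ) : ‖((bernoulli i : ℚ) : ℚ_[p])‖ ≤ (p:ℝ) := by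
  induction i using Nat.strong_induction_on with
  | _ i ih =>
  have hp0 : (0:ℝ) < p := by exact_mod_cast hp.out.pos
  have hQ : (bernoulli i) * (p:ℚ) = (∑ k ∈ range p, (k:ℚ)^i)
      - ∑ j ∈ range i, bernoulli j * (i.choose j) * (p:ℚ)^(i+1-j) / ((i+1-j : ℕ) : ℚ) := by
    have hF := sum_range_pow p i
    rw [Finset.sum_range_succ] at hF
    have hlast : bernoulli i * ((i + 1).choose i) * (p:ℚ) ^ (i + 1 - i) / (i + 1)
        = bernoulli i * p := by
      have h1 : i + 1 - i = 1 := by omega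
      rw [h1, Nat.choose_succ_self_right]
      have : ((i:ℚ) + 1) ≠ 0 := by positivity
      field_simp
      push_cast
      ring
    have hterms : ∀ j ∈ range i,
        bernoulli j * ((i + 1).choose j) * (p:ℚ) ^ (i + 1 - j) / (i + 1)
          = bernoulli j * (i.choose j) * (p:ℚ)^(i+1-j) / ((i+1-j : ℕ) : ℚ) := by
      intro j hj
      have hjlt : j < i := mem_range.mp hj
      have hcc : ((i.choose j : ℕ) : ℚ) * ((i+1 : ℕ) : ℚ)
          = (((i+1).choose j : ℕ) : ℚ) * ((i+1-j : ℕ) : ℚ) := by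
        exact_mod_cast congrArg (Nat.cast : ℕ → ℚ) (Nat.choose_mul_succ_eq i j)
      have h1 : ((i:ℚ) + 1) ≠ 0 := by positivity
      have h2 : ((i+1-j : ℕ) : ℚ) ≠ 0 := by
        have : 0 < i + 1 - j := by omega
        exact_mod_cast this.ne'
      rw [div_eq_div_iff h1 h2]
      push_cast at hcc ⊢
      linear_combination (bernoulli j * (p:ℚ)^(i+1-j)) * hcc.symm
    rw [Finset.sum_congr rfl hterms, hlast] at hF
    linarith [hF]
  have hP := congrArg (⇑(Rat.castHom ℚ_[p])) hQ
  simp only [map_mul, map_sub, map_sum, map_div₀, map_pow, map_natCast, Rat.coe_castHom] at hP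
  -- hP : (B_i : ℚ_[p]) * p = S - T
  have hS : ‖∑ k ∈ range p, ((k:ℚ_[p]))^i‖ ≤ 1 := by
    apply IsUltrametricDist.norm_sum_le_of_forall_le_of_nonneg zero_le_one
    intro k _
    rw [norm_pow]
    exact pow_le_one₀ (norm_nonneg _) (norm_nat_le_one k)
  have hT : ‖∑ j ∈ range i, ((bernoulli j : ℚ) : ℚ_[p]) * ((i.choose j : ℕ) : ℚ_[p])
      * ((p:ℚ_[p]))^(i+1-j) / ((i+1-j : ℕ) : ℚ_[p])‖ ≤ 1 := by
    apply IsUltrametricDist.norm_sum_le_of_forall_le_of_nonneg zero_le_one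
    intro j hj
    have hjlt : j < i := mem_range.mp hj
    set s : ℕ := i + 1 - j with hs
    have hs1 : 1 ≤ s := by omega
    rw [div_eq_mul_inv, norm_mul, norm_mul, norm_mul, norm_pow, Padic.norm_p]
    have h1 : ‖((bernoulli j : ℚ) : ℚ_[p])‖ ≤ (p:ℝ) := ih j hjlt
    have h2 : ‖((i.choose j : ℕ) : ℚ_[p])‖ ≤ 1 := norm_nat_le_one _
    have h3 : ‖((s : ℚ_[p]))⁻¹‖ ≤ (p:ℝ)^(s-1) := norm_inv_nat_le s (by omega)
    calc ‖((bernoulli j : ℚ) : ℚ_[p])‖ * ‖((i.choose j : ℕ) : ℚ_[p])‖ * ((p:ℝ))⁻¹^s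
          * ‖((s : ℚ_[p]))⁻¹‖
        ≤ (p:ℝ) * 1 * ((p:ℝ))⁻¹^s * (p:ℝ)^(s-1) := by
          gcongr <;> first | assumption | positivity
    _ = 1 := by
          rw [mul_one, inv_pow]
          have hps : (p:ℝ)^(s-1) * (p:ℝ) = (p:ℝ)^s := by
            rw [← pow_succ]; congr 1; omega
          field_simp
          linarith [hps]
  have key : ‖((bernoulli i : ℚ) : ℚ_[p]) * ((p:ℚ_[p]))‖ ≤ 1 := by
    rw [hP, sub_eq_add_neg]
    refine (IsUltrametricDist.norm_add_le_max _ _).trans (max_le hS ?_)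
    rw [norm_neg]; exact hT
  rw [norm_mul, Padic.norm_p] at key
  calc ‖((bernoulli i : ℚ) : ℚ_[p])‖
      = (‖((bernoulli i : ℚ) : ℚ_[p])‖ * (p:ℝ)⁻¹) * p := by field_simp
  _ ≤ 1 * p := by gcongr
  _ = p := one_mul _


lemma aux_pow_le_one {x : ℝ} (hx : 1 ≤ x) {a b : ℕ} (hab : a ≤ b) :
    (x⁻¹)^b * x^a ≤ 1 := by
  have hx0 : (0:ℝ) < x := lt_of_lt_of_le one_pos hx
  have h1 : (x⁻¹)^b * x^a = x^a / x^b := by rw [inv_pow]; ring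
  rw [h1, div_le_one (by positivity)]
  gcongr <;> first | exact hx | exact hab

section Main
variable {p : ℕ} [hp : Fact p.Prime]

theorem bernoulli_div_n_p_integer' (n : ℕ) (hn : 0 < n)
    (hnd : ¬ (p - 1) ∣ n) :
    0 ≤ padicValRat p (bernoulli n / n) := by
  -- choose a primitive root
  obtain ⟨g, hg⟩ := IsCyclic.exists_generator (α := (ZMod p)ˣ)
  haveI : NeZero p := ⟨hp.out.pos.ne'⟩
  have hcard : Fintype.card (ZMod p)ˣ = p - 1 := by
    rw [ZMod.card_units_eq_totient, Nat.totient_prime hp.out]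
  have horder : orderOf g = p - 1 := by
    rw [orderOf_eq_card_of_forall_mem_zpowers hg, Nat.card_eq_fintype_card, hcard]
  have hgn : g ^ n ≠ 1 := fun h => hnd (horder ▸ orderOf_dvd_of_pow_eq_one h)
  set A : ℕ := (g : ZMod p).val with hA
  have hAg : ((A : ℕ) : ZMod p) = (g : ZMod p) := ZMod.natCast_rightInverse _
  have hpA : ¬ p ∣ A := by
    intro hdvd
    have h0 : ((A : ℕ) : ZMod p) = 0 := (ZMod.natCast_eq_zero_iff _ _).mpr hdvd
    exact g.ne_zero (by rw [← hAg, h0])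
  have hA2 : ¬ (p:ℤ) ∣ ((A:ℤ)^n - 1) := by
    intro hdvd
    have h0 : (((A:ℤ)^n - 1 : ℤ) : ZMod p) = 0 := (ZMod.intCast_zmod_eq_zero_iff_dvd _ _).mpr hdvd
    push_cast at h0
    rw [hAg] at h0
    apply hgn
    ext
    push_cast
    have : (g : ZMod p)^n - 1 = 0 := h0
    linear_combination this
  -- setup modulus
  set L : ℕ := 2*n + 2 with hL
  set M : ℕ := p ^ L with hM
  have hM1 : 1 < M := Nat.one_lt_pow (by omega) hp.out.one_lt
  have hcop : Nat.Coprime A M :=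
    (((Nat.Prime.coprime_iff_not_dvd hp.out).mpr hpA).symm).pow_right L
  obtain ⟨c, d, hV⟩ := voronoi n M A hn hM1 hcop
  have hVQ : ((A:ℚ)^n - 1) * ∑ j ∈ range M, (j:ℚ)^n = n*M*c + M^2*d := by
    exact_mod_cast hV
  have hn0 : ((n:ℚ)) ≠ 0 := Nat.cast_ne_zero.mpr hn.ne'
  have hM0 : ((M:ℚ)) ≠ 0 := Nat.cast_ne_zero.mpr (by omega)
  set U : ℚ := ∑ i ∈ range n,
      bernoulli i * (((n+1).choose i : ℕ):ℚ) * (M:ℚ)^(n-i) * (((n+1 : ℕ) : ℚ))⁻¹ with hU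
  have hF : (∑ k ∈ range M, (k:ℚ)^n) = U * M + bernoulli n * M := by
    rw [sum_range_pow M n, Finset.sum_range_succ]
    congr 1
    · rw [hU, Finset.sum_mul]
      apply Finset.sum_congr rfl
      intro i hi
      have hni : n + 1 - i = (n - i) + 1 := by have := mem_range.mp hi; omega
      rw [hni, pow_succ, div_eq_mul_inv]
      push_cast
      ring
    · have h1 : n+1-n = 1 := by omega
      rw [h1, Nat.choose_succ_self_right, pow_one]
      have hq1 : ((n:ℚ)+1) ≠ 0 := by positivity
      push_cast
      field_simp
  set Φ : ℚ := (A:ℚ)^n - 1 with hPhi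
  have h1 : Φ * (U * M + bernoulli n * M) = n*M*c + M^2*d := by rw [← hF]; exact hVQ
  have h3 : Φ * (U + bernoulli n) = n*c + M*d := by
    apply mul_right_cancel₀ hM0
    calc Φ*(U+bernoulli n)*M = Φ*(U*M + bernoulli n*M) := by ring
    _ = n*M*c + M^2*d := h1
    _ = (n*c + M*d)*M := by ring
  have hEQ : bernoulli n / n * Φ = c + M*d/n - Φ/n*U := by
    field_simp
    linear_combination h3
  -- move to ℚ_[p]
  have hPE := congrArg (⇑(Rat.castHom ℚ_[p])) hEQ
  have hUc : ((U : ℚ) : ℚ_[p]) = ∑ i ∈ range n,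
      ((bernoulli i : ℚ) : ℚ_[p]) * (((n+1).choose i : ℕ) : ℚ_[p]) * ((M:ℚ_[p]))^(n-i)
        * (((n+1:ℕ) : ℚ_[p]))⁻¹ := by
    rw [hU]
    push_cast
    rfl
  have hPhic : ((Φ : ℚ) : ℚ_[p]) = (((A:ℤ)^n - 1 : ℤ) : ℚ_[p]) := by
    rw [hPhi]; push_cast; ring
  simp only [map_mul, map_sub, map_add, map_div₀, map_intCast, map_natCast,
    Rat.coe_castHom] at hPE
  rw [hUc, hPhic] at hPE
  -- norm estimates
  have hp1R : (1:ℝ) < p := by exact_mod_cast hp.out.one_lt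
  have hp0R : (0:ℝ) < p := lt_trans one_pos hp1R
  have hPhinorm : ‖(((A:ℤ)^n - 1 : ℤ) : ℚ_[p])‖ = 1 :=
    le_antisymm (Padic.norm_int_le_one _)
      (le_of_not_gt (fun h => hA2 (Padic.norm_intCast_lt_one_iff.mp h)))
  have hMnorm : ‖((M:ℚ_[p]))‖ = ((p:ℝ)⁻¹)^L := by
    rw [hM]; push_cast; rw [norm_pow, Padic.norm_p]
  have hninv : ‖((n:ℚ_[p]))⁻¹‖ ≤ (p:ℝ)^(n-1) := norm_inv_nat_le n hn
  have hUnorm : ‖∑ i ∈ range n,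
      ((bernoulli i : ℚ) : ℚ_[p]) * (((n+1).choose i : ℕ) : ℚ_[p]) * ((M:ℚ_[p]))^(n-i)
        * (((n+1:ℕ) : ℚ_[p]))⁻¹‖ ≤ (p:ℝ)^(n+1) * ((p:ℝ)⁻¹)^L := by
    apply IsUltrametricDist.norm_sum_le_of_forall_le_of_nonneg (by positivity)
    intro i hi
    have hilt : i < n := mem_range.mp hi
    rw [norm_mul, norm_mul, norm_mul, norm_pow, hMnorm]
    have h1 : ‖((bernoulli i : ℚ) : ℚ_[p])‖ ≤ (p:ℝ) := norm_bernoulli_le i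
    have h2 : ‖(((n+1).choose i : ℕ) : ℚ_[p])‖ ≤ 1 := norm_nat_le_one _
    have h3 : ‖(((n+1:ℕ) : ℚ_[p]))⁻¹‖ ≤ (p:ℝ)^n := by
      have := norm_inv_nat_le (p := p) (n+1) (by omega)
      simpa using this
    have h4 : (((p:ℝ)⁻¹)^L)^(n-i) ≤ ((p:ℝ)⁻¹)^L := by
      rw [← pow_mul]
      apply pow_le_pow_of_le_one (by positivity) (by
        rw [inv_le_one_iff₀]; right; exact le_of_lt hp1R)
      have : 1 ≤ n - i := by omega
      calc L = L * 1 := (mul_one L).symm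
      _ ≤ L * (n-i) := by exact Nat.mul_le_mul_left L this
    calc ‖((bernoulli i : ℚ) : ℚ_[p])‖ * ‖(((n+1).choose i : ℕ) : ℚ_[p])‖ * (((p:ℝ)⁻¹)^L)^(n-i)
          * ‖(((n+1:ℕ) : ℚ_[p]))⁻¹‖
        ≤ (p:ℝ) * 1 * ((p:ℝ)⁻¹)^L * (p:ℝ)^n := by
          gcongr <;> first | assumption | positivity
    _ = (p:ℝ)^(n+1) * ((p:ℝ)⁻¹)^L := by rw [pow_succ]; ring
  have hc : ‖((c:ℤ) : ℚ_[p])‖ ≤ 1 := Padic.norm_int_le_one _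
  have hpiece2 : ‖(M:ℚ_[p]) * ((d:ℤ) : ℚ_[p]) / ((n:ℚ_[p]))‖ ≤ 1 := by
    rw [div_eq_mul_inv, norm_mul, norm_mul, hMnorm]
    calc ((p:ℝ)⁻¹)^L * ‖((d:ℤ):ℚ_[p])‖ * ‖((n:ℚ_[p]))⁻¹‖
        ≤ ((p:ℝ)⁻¹)^L * 1 * (p:ℝ)^(n-1) := by
          gcongr <;> first | exact Padic.norm_int_le_one _ | assumption | positivity
    _ = ((p:ℝ)⁻¹)^L * (p:ℝ)^(n-1) := by ring
    _ ≤ 1 := aux_pow_le_one (le_of_lt hp1R) (by omega)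
  have hpiece3 : ‖(((A:ℤ)^n - 1 : ℤ) : ℚ_[p]) / ((n:ℚ_[p])) * (∑ i ∈ range n,
      ((bernoulli i : ℚ) : ℚ_[p]) * (((n+1).choose i : ℕ) : ℚ_[p]) * ((M:ℚ_[p]))^(n-i)
        * (((n+1:ℕ) : ℚ_[p]))⁻¹)‖ ≤ 1 := by
    rw [norm_mul, div_eq_mul_inv, norm_mul, hPhinorm, one_mul]
    calc ‖((n:ℚ_[p]))⁻¹‖ * ‖∑ i ∈ range n,
        ((bernoulli i : ℚ) : ℚ_[p]) * (((n+1).choose i : ℕ) : ℚ_[p]) * ((M:ℚ_[p]))^(n-i)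
          * (((n+1:ℕ) : ℚ_[p]))⁻¹‖
        ≤ (p:ℝ)^(n-1) * ((p:ℝ)^(n+1) * ((p:ℝ)⁻¹)^L) := by
          gcongr <;> first | assumption | positivity
    _ = ((p:ℝ)⁻¹)^L * (p:ℝ)^(n-1+(n+1)) := by rw [pow_add]; ring
    _ ≤ 1 := aux_pow_le_one (le_of_lt hp1R) (by omega)
  -- conclude
  have hrhs : ‖((bernoulli n : ℚ) : ℚ_[p]) / ((n:ℚ_[p])) * (((A:ℤ)^n - 1 : ℤ) : ℚ_[p])‖ ≤ 1 := by
    rw [hPE, sub_eq_add_neg]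
    refine (IsUltrametricDist.norm_add_le_max _ _).trans (max_le ?_ ?_)
    · exact (IsUltrametricDist.norm_add_le_max _ _).trans (max_le hc hpiece2)
    · rw [norm_neg]; exact hpiece3
  rw [norm_mul, hPhinorm, mul_one] at hrhs
  have hfinal : ‖((bernoulli n / (n:ℚ) : ℚ) : ℚ_[p])‖ ≤ 1 := by
    have hcast : ((bernoulli n / (n:ℚ) : ℚ) : ℚ_[p])
        = ((bernoulli n : ℚ) : ℚ_[p]) / ((n:ℚ_[p])) := by push_cast; rfl
    rw [hcast]; exact hrhs
  by_cases hq : bernoulli n / (n:ℚ) = 0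
  · rw [hq]; simp
  · rw [Padic.eq_padicNorm, padicNorm.eq_zpow_of_nonzero hq] at hfinal
    have hQle : ((p:ℚ))^(-(padicValRat p (bernoulli n / n))) ≤ 1 := by exact_mod_cast hfinal
    by_contra hneg
    push_neg at hneg
    have h1 : (1:ℚ) < ((p:ℚ))^(-(padicValRat p (bernoulli n / n))) := by
      apply one_lt_zpow₀ (by exact_mod_cast hp.out.one_lt)
      omega
    linarith



end Main

/-- Adams: if `p - 1 ∤ n` then `B_n / n` is a `p`-integer. -/
theorem bernoulli_div_n_p_integer (n : ℕ) (hn : 0 < n) (he : Even n)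
    (p : ℕ) (hp : p.Prime) (hnd : ¬ (p - 1) ∣ n) :
    0 ≤ padicValRat p (bernoulli n / n) := by
  haveI : Fact p.Prime := ⟨hp⟩
  exact bernoulli_div_n_p_integer' n hn hnd
end

section
/- Let n be an even positive integer. Then the product over all primes p with (p-1) ∤ n of p^(ord_p n) divides the numerator of B_n; equivalently, for every prime p with (p-1) ∤ n, ord_p(B_n) ≥ ord_p(n). -/
open Finset

lemma adams_aux_c (p n : ℕ) (hp : p.Prime) (hnd : ¬ (p - 1) ∣ n) :
    ∃ c : ℕ, ¬ p ∣ c ∧ ¬ (p : ℤ) ∣ ((c : ℤ) ^ n - 1) := by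
  haveI : Fact p.Prime := ⟨hp⟩
  obtain ⟨g, hg⟩ := IsCyclic.exists_generator (α := (ZMod p)ˣ)
  have hc : (((g : ZMod p)).val : ZMod p) = (g : ZMod p) := by
    rw [ZMod.natCast_val, ZMod.cast_id]
  refine ⟨((g : ZMod p)).val, ?_, ?_⟩
  · rw [← ZMod.natCast_eq_zero_iff, hc]
    exact g.ne_zero
  · rw [← ZMod.intCast_zmod_eq_zero_iff_dvd]
    push_cast
    rw [hc]
    intro h
    have h1 : ((g ^ n : (ZMod p)ˣ) : ZMod p) = 1 := by
      push_cast
      rw [sub_eq_zero] at h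
      exact h
    have h2 : (g : (ZMod p)ˣ) ^ n = 1 := Units.ext h1
    have := orderOf_dvd_of_pow_eq_one h2
    rw [orderOf_eq_card_of_forall_mem_zpowers hg, Nat.card_eq_fintype_card, ZMod.card_units_eq_totient,
      Nat.totient_prime hp] at this
    exact hnd this


open Finset

/-- valuation lower bound for sums. -/
lemma adams_val_sum {p : ℕ} [hp : Fact p.Prime] (c : ℤ) :
    ∀ (t : ℕ) (F : ℕ → ℚ), (∀ i < t, F i ≠ 0 → c ≤ padicValRat p (F i)) →
      (∑ i ∈ range t, F i) ≠ 0 → c ≤ padicValRat p (∑ i ∈ range t, F i) := by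
  intro t
  induction t with
  | zero => intro F _ h0; simp at h0
  | succ d ih =>
    intro F hF h0
    rw [Finset.sum_range_succ] at h0 ⊢
    by_cases h : ∑ i ∈ range d, F i = 0
    · rw [h, zero_add] at h0 ⊢
      exact hF d (Nat.lt_succ_self d) h0
    · by_cases hd : F d = 0
      · rw [hd, add_zero] at h0 ⊢
        exact ih F (fun i hi => hF i (hi.trans (Nat.lt_succ_self d))) h
      · refine le_trans ?_ (padicValRat.min_le_padicValRat_add (p := p) h0)
        exact le_min (ih F (fun i hi => hF i (hi.trans (Nat.lt_succ_self d))) h)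
          (hF d (Nat.lt_succ_self d) hd)

lemma padicValNat_le_self (p d : ℕ) (hp : 1 < p) : padicValNat p d ≤ d := by
  rcases Nat.eq_zero_or_pos d with rfl | hd
  · simp
  · have h1 : p ^ padicValNat p d ∣ d := pow_padicValNat_dvd
    have h2 : p ^ padicValNat p d ≤ d := Nat.le_of_dvd hd h1
    calc padicValNat p d ≤ 2 ^ padicValNat p d - 1 := by
          have := Nat.lt_two_pow_self (n := padicValNat p d); omega
      _ ≤ p ^ padicValNat p d - 1 := by
          have := Nat.pow_le_pow_left (show 2 ≤ p from hp) (padicValNat p d); omega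
      _ ≤ d := by omega


open Finset

lemma adams_key_sum (p n : ℕ) (hp : p.Prime) (hodd : Odd p) (hn : 0 < n)
    (c : ℕ) (hc : ¬ p ∣ c) (hc1 : ¬ (p : ℤ) ∣ ((c : ℤ) ^ n - 1)) (L : ℕ) :
    (p : ℤ) ^ (L + padicValNat p n) ∣ ∑ k ∈ range (p ^ L), (k : ℤ) ^ n := by
  haveI : Fact p.Prime := ⟨hp⟩
  set m := padicValNat p n with hm
  induction L with
  | zero => simp [zero_pow hn.ne']
  | succ L ih =>
    classical
    set N := p ^ (L + 1) with hN
    have hppos : 0 < p := hp.pos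
    have hNpos : 0 < N := pow_pos hppos _
    have hN1 : 1 < N := Nat.one_lt_pow (Nat.succ_ne_zero L) hp.one_lt
    have hpN : p ∣ N := dvd_pow_self p (Nat.succ_ne_zero L)
    -- split the sum into units and multiples of p
    have hsplit : ∑ k ∈ range N, (k : ℤ) ^ n =
        (∑ k ∈ (range N).filter (fun k => p ∣ k), (k : ℤ) ^ n) +
        ∑ k ∈ (range N).filter (fun k => ¬ p ∣ k), (k : ℤ) ^ n :=
      (Finset.sum_filter_add_sum_filter_not _ _ _).symm
    -- the multiples-of-p part
    have hmul : ∑ k ∈ (range N).filter (fun k => p ∣ k), (k : ℤ) ^ n =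
        (p : ℤ) ^ n * ∑ j ∈ range (p ^ L), (j : ℤ) ^ n := by
      rw [Finset.mul_sum]
      refine Finset.sum_nbij' (fun k => k / p) (fun j => p * j) ?_ ?_ ?_ ?_ ?_
      · intro a ha
        simp only [Finset.mem_filter, Finset.mem_range] at ha
        rw [Finset.mem_range]
        rw [Nat.div_lt_iff_lt_mul hppos]
        calc a < p ^ (L + 1) := ha.1
          _ = p ^ L * p := by ring
      · intro a ha
        simp only [Finset.mem_range] at ha
        simp only [Finset.mem_filter, Finset.mem_range]
        constructor
        · calc p * a < p * p ^ L := by exact (Nat.mul_lt_mul_left hppos).mpr ha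
            _ = p ^ (L + 1) := by ring
        · exact Dvd.intro a rfl
      · intro a ha
        simp only [Finset.mem_filter, Finset.mem_range] at ha
        exact Nat.mul_div_cancel' ha.2
      · intro a _
        exact Nat.mul_div_cancel_left a hppos
      · intro a ha
        simp only [Finset.mem_filter, Finset.mem_range] at ha
        obtain ⟨b, rfl⟩ := ha.2
        have hb : p * b / p = b := Nat.mul_div_cancel_left b hppos
        simp only [hb]
        push_cast
        ring
    -- the units part
    set s := (range N).filter (fun k => ¬ p ∣ k) with hs
    set U := ∑ k ∈ s, (k : ℤ) ^ n with hU
    -- inverse of c mod N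
    have hcopr : Nat.Coprime c N := ((Nat.Prime.coprime_iff_not_dvd hp).mpr hc).symm.pow_right _
    obtain ⟨c', -, hcc'⟩ := Nat.exists_mul_mod_eq_one_of_coprime hcopr hN1
    have hmodN : ∀ k, ¬ p ∣ k → ¬ p ∣ (c * k % N) := by
      intro k hk hdvd
      have h1 : c * k % N % p = c * k % p := Nat.mod_mod_of_dvd _ hpN
      have h2 : p ∣ c * k := by
        rw [Nat.dvd_iff_mod_eq_zero] at hdvd ⊢
        rw [← h1]; exact hdvd
      rcases (Nat.Prime.dvd_mul hp).mp h2 with h | h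
      · exact hc h
      · exact hk h
    have hmem : ∀ k ∈ s, c * k % N ∈ s := by
      intro k hk
      simp only [hs, Finset.mem_filter, Finset.mem_range] at hk ⊢
      exact ⟨Nat.mod_lt _ hNpos, hmodN k hk.2⟩
    have hinv : ∀ k < N, c' * (c * k % N) % N = k := by
      intro k hkN
      have h1 : c' * (c * k % N) ≡ c' * (c * k) [MOD N] :=
        Nat.ModEq.mul_left _ (Nat.mod_modEq _ _)
      have h2 : c' * (c * k) = (c * c') * k := by ring
      have h3 : (c * c') * k ≡ 1 * k [MOD N] := by
        refine Nat.ModEq.mul_right k ?_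
        show c * c' % N = 1 % N
        rw [hcc', Nat.mod_eq_of_lt hN1]
      calc c' * (c * k % N) % N = ((c * c') * k) % N := by rw [← h2]; exact h1
        _ = (1 * k) % N := h3
        _ = k := by rw [one_mul, Nat.mod_eq_of_lt hkN]
    -- the permutation identity
    have hperm : ∑ k ∈ s, ((c * k % N : ℕ) : ℤ) ^ n = U := by
      rw [hU]
      refine Finset.sum_nbij' (fun k => c * k % N) (fun k => c' * k % N) hmem ?_ ?_ ?_ ?_
      · intro k hk
        simp only [hs, Finset.mem_filter, Finset.mem_range] at hk ⊢
        constructor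
        · exact Nat.mod_lt _ hNpos
        · intro hdvd
          have h1 : c' * k % N % p = c' * k % p := Nat.mod_mod_of_dvd _ hpN
          have h2 : p ∣ c' * k := by
            rw [Nat.dvd_iff_mod_eq_zero] at hdvd ⊢
            rw [← h1]; exact hdvd
          rcases (Nat.Prime.dvd_mul hp).mp h2 with h | h
          · -- p ∣ c' ; but c * c' % N = 1 means c' coprime to N, and p ∣ N
            exfalso
            have h4 : c * c' ≡ 1 [MOD N] := by
              show c * c' % N = 1 % N
              rw [hcc', Nat.mod_eq_of_lt hN1]
            have h5 : c * c' % p = 1 % p := Nat.ModEq.of_dvd hpN h4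
            have h6 : p ∣ c * c' := Dvd.dvd.mul_left h _
            rw [Nat.dvd_iff_mod_eq_zero] at h6
            have h8 : 1 % p = 1 := Nat.mod_eq_of_lt hp.one_lt
            omega
          · exact hk.2 h
      · intro k hk
        simp only [hs, Finset.mem_filter, Finset.mem_range] at hk
        exact hinv k hk.1
      · intro k hk
        simp only [hs, Finset.mem_filter, Finset.mem_range] at hk
        -- c * (c' * k % N) % N = k : symmetric
        have h1 : c * (c' * k % N) ≡ c * (c' * k) [MOD N] :=
          Nat.ModEq.mul_left _ (Nat.mod_modEq _ _)
        have h2 : c * (c' * k) = (c * c') * k := by ring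
        have h3 : (c * c') * k ≡ 1 * k [MOD N] := by
          refine Nat.ModEq.mul_right k ?_
          show c * c' % N = 1 % N
          rw [hcc', Nat.mod_eq_of_lt hN1]
        calc c * (c' * k % N) % N = ((c * c') * k) % N := by rw [← h2]; exact h1
          _ = (1 * k) % N := h3
          _ = k := by rw [one_mul, Nat.mod_eq_of_lt hk.1]
      · intro k _
        rfl
    -- termwise LTE divisibility
    have hterm : ∀ k ∈ s, (p : ℤ) ^ (L + 1 + m) ∣
        (((c * k : ℕ) : ℤ) ^ n - ((c * k % N : ℕ) : ℤ) ^ n) := by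
      intro k hk
      simp only [hs, Finset.mem_filter, Finset.mem_range] at hk
      set a := c * k with ha
      have hxy : ((a : ℕ) : ℤ) - ((a % N : ℕ) : ℤ) = (N : ℤ) * ((a / N : ℕ) : ℤ) := by
        have h : ((a : ℕ) : ℤ) = ((a % N : ℕ) : ℤ) + ((N * (a / N) : ℕ) : ℤ) := by
          exact_mod_cast congrArg (Nat.cast : ℕ → ℤ) (Nat.mod_add_div a N).symm
        rw [h]
        push_cast
        ring
      have hdvd1 : (p : ℤ) ∣ ((a : ℕ) : ℤ) - ((a % N : ℕ) : ℤ) := by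
        rw [hxy]
        exact Dvd.dvd.mul_right (by exact_mod_cast Int.natCast_dvd_natCast.mpr hpN) _
      have hx : ¬ (p : ℤ) ∣ ((a : ℕ) : ℤ) := by
        rw [Int.natCast_dvd_natCast]
        intro hd
        rcases (Nat.Prime.dvd_mul hp).mp hd with h | h
        · exact hc h
        · exact hk.2 h
      have hLTE := Int.emultiplicity_pow_sub_pow hp hodd hdvd1 hx n
      apply pow_dvd_of_le_emultiplicity
      rw [hLTE]
      have e1 : (↑(L + 1) : ℕ∞) ≤ emultiplicity (↑p : ℤ) (((a : ℕ) : ℤ) - ((a % N : ℕ) : ℤ)) := by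
        apply le_emultiplicity_of_pow_dvd
        rw [hxy]
        refine Dvd.dvd.mul_right ?_ _
        rw [hN]
        push_cast
        rfl
      have e2 : (↑m : ℕ∞) ≤ emultiplicity p n := by
        rw [← padicValNat_eq_emultiplicity hn.ne']
      calc (↑(L + 1 + m) : ℕ∞) = ↑(L + 1) + ↑m := by push_cast; rfl
        _ ≤ _ := add_le_add e1 e2
    -- conclude for U
    have hfac : ((c : ℤ) ^ n - 1) * U =
        ∑ k ∈ s, (((c * k : ℕ) : ℤ) ^ n - ((c * k % N : ℕ) : ℤ) ^ n) := by
      rw [Finset.sum_sub_distrib, hperm, sub_mul, one_mul]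
      congr 1
      rw [Finset.mul_sum]
      refine Finset.sum_congr rfl ?_
      intro k _
      push_cast
      ring
    have hdvdU : (p : ℤ) ^ (L + 1 + m) ∣ U := by
      have h1 : (p : ℤ) ^ (L + 1 + m) ∣ ((c : ℤ) ^ n - 1) * U := by
        rw [hfac]
        exact Finset.dvd_sum hterm
      have hcop : IsCoprime ((p : ℤ) ^ (L + 1 + m)) ((c : ℤ) ^ n - 1) :=
        ((Prime.coprime_iff_not_dvd (Nat.prime_iff_prime_int.mp hp)).mpr hc1).pow_left
      exact hcop.dvd_of_dvd_mul_left h1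
    -- combine
    rw [hsplit, hmul]
    refine dvd_add ?_ hdvdU
    have h2 : (p : ℤ) ^ (L + 1 + m) = (p : ℤ) * (p : ℤ) ^ (L + m) := by
      rw [show L + 1 + m = (L + m) + 1 by omega, pow_succ]
      ring
    rw [h2]
    have h3 : (p : ℤ) ^ n = (p : ℤ) * (p : ℤ) ^ (n - 1) := by
      rw [← pow_succ']
      congr 1
      omega
    rw [h3, mul_assoc]
    exact mul_dvd_mul_left _ (Dvd.dvd.mul_left ih _)


lemma adams_bernoulli_ne_zero {k : ℕ} (hk : k ≠ 0) : bernoulli (2 * k) ≠ 0 := by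
  intro h0
  have hz := riemannZeta_two_mul_nat hk
  rw [h0] at hz
  simp only [Rat.cast_zero, mul_zero, zero_div] at hz
  have hre : 1 < ((2 * k : ℂ)).re := by
    have : ((2 : ℂ) * k) = ((2 * k : ℕ) : ℂ) := by push_cast; ring
    rw [this, Complex.natCast_re]
    exact_mod_cast (by omega : 1 < 2 * k)
  exact riemannZeta_ne_zero_of_one_lt_re hre hz

/-- Adams' theorem: for a prime `p` with `p - 1 ∤ n`, `ord_p(B_n) ≥ ord_p(n)`. -/
theorem adams_theorem (n : ℕ) (hn : 0 < n) (he : Even n)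
    (p : ℕ) (hp : p.Prime) (hnd : ¬ (p - 1) ∣ n) :
    (padicValNat p n : ℤ) ≤ padicValRat p (bernoulli n) := by
  haveI : Fact p.Prime := ⟨hp⟩
  have hp2 : p ≠ 2 := by rintro rfl; exact hnd (one_dvd n)
  have hodd : Odd p := hp.odd_of_ne_two hp2
  obtain ⟨c, hc, hc1⟩ := adams_aux_c p n hp hnd
  set m := padicValNat p n with hm
  set D := ∑ i ∈ range n, (bernoulli i).den with hD
  set L := 1 + m + padicValNat p (n + 1) + D with hL
  -- basic facts
  have hppos : (0 : ℚ) < p := by exact_mod_cast hp.pos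
  have hpq : (p : ℚ) ≠ 0 := ne_of_gt hppos
  have hX0 : ((p ^ L : ℕ) : ℚ) ≠ 0 := by
    exact_mod_cast (pow_pos hp.pos L).ne'
  have hY0 : ((n : ℚ) + 1) ≠ 0 := by positivity
  -- Faulhaber
  have hF := sum_range_pow (p ^ L) n
  rw [Finset.sum_range_succ] at hF
  -- bernoulli as a sum
  set X : ℚ := ((p ^ L : ℕ) : ℚ) with hX
  set S : ℚ := ∑ k ∈ range (p ^ L), (k : ℚ) ^ n with hS
  set G : ℕ → ℚ := fun i =>
    if i < n then -(bernoulli i * (((n + 1).choose i : ℕ) : ℚ) * X ^ (n + 1 - i)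
      / ((n : ℚ) + 1) / X) else S / X with hG
  have hkey : bernoulli n = ∑ i ∈ range (n + 1), G i := by
    rw [Finset.sum_range_succ]
    have h1 : ∀ i ∈ range n, G i = -(bernoulli i * (((n + 1).choose i : ℕ) : ℚ)
        * X ^ (n + 1 - i) / ((n : ℚ) + 1) / X) := by
      intro i hi
      rw [Finset.mem_range] at hi
      simp only [hG, if_pos hi]
    have h2 : G n = S / X := by simp only [hG, if_neg (lt_irrefl n)]
    rw [Finset.sum_congr rfl h1, h2]
    have h3 : bernoulli n * (((n + 1).choose n : ℕ) : ℚ) * X ^ (n + 1 - n) / ((n : ℚ) + 1)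
        = bernoulli n * X := by
      rw [Nat.choose_succ_self_right, show n + 1 - n = 1 by omega, pow_one]
      push_cast
      field_simp
    have h4 : ∑ i ∈ range n, -(bernoulli i * (((n + 1).choose i : ℕ) : ℚ)
        * X ^ (n + 1 - i) / ((n : ℚ) + 1) / X)
        = -((∑ i ∈ range n, bernoulli i * (((n + 1).choose i : ℕ) : ℚ)
        * X ^ (n + 1 - i) / ((n : ℚ) + 1)) / X) := by
      rw [Finset.sum_neg_distrib, neg_inj, Finset.sum_div]
    rw [h4]
    have h5 : S = (∑ i ∈ range n, bernoulli i * (((n + 1).choose i : ℕ) : ℚ)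
        * X ^ (n + 1 - i) / ((n : ℚ) + 1)) + bernoulli n * X := by
      rw [hF, h3]
    rw [h5]
    field_simp
    ring
  rw [hkey]
  apply adams_val_sum (p := p) (m : ℤ) (n + 1) G _ (by rw [← hkey]; exact (by
    obtain ⟨k, hk⟩ := he
    have : n = 2 * k := by omega
    rw [this]
    exact adams_bernoulli_ne_zero (by omega)))
  intro i hi hGi
  by_cases hin : i < n
  · -- small terms
    simp only [hG, if_pos hin] at hGi ⊢
    have hb : bernoulli i ≠ 0 := by
      intro h
      apply hGi
      rw [h]
      simp
    have hCq : (((n + 1).choose i : ℕ) : ℚ) ≠ 0 := by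
      have := Nat.choose_pos (show i ≤ n + 1 by omega)
      positivity
    have hXp : X ^ (n + 1 - i) ≠ 0 := pow_ne_zero _ hX0
    have hXq : X = (p : ℚ) ^ L := by rw [hX]; push_cast; ring
    have fX : padicValRat p X = (L : ℤ) := by
      rw [hXq, padicValRat.pow (p : ℚ), padicValRat.self hp.one_lt, mul_one]
    have fXp : padicValRat p (X ^ (n + 1 - i)) = ((L * (n + 1 - i) : ℕ) : ℤ) := by
      rw [hXq, ← pow_mul, padicValRat.pow (p : ℚ), padicValRat.self hp.one_lt, mul_one]
    have fY : padicValRat p ((n : ℚ) + 1) = ((padicValNat p (n + 1) : ℕ) : ℤ) := by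
      rw [show ((n : ℚ) + 1) = ((n + 1 : ℕ) : ℚ) by push_cast; ring, padicValRat.of_nat]
    have fB : -(((bernoulli i).den : ℕ) : ℤ) ≤ padicValRat p (bernoulli i) := by
      rw [padicValRat_def]
      have g1 : (0 : ℤ) ≤ (padicValInt p (bernoulli i).num : ℤ) := Int.natCast_nonneg _
      have g2 : padicValNat p (bernoulli i).den ≤ (bernoulli i).den :=
        padicValNat_le_self p _ hp.one_lt
      omega
    have fC : (0 : ℤ) ≤ padicValRat p (((n + 1).choose i : ℕ) : ℚ) := by
      rw [padicValRat.of_nat]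
      exact Int.natCast_nonneg _
    rw [padicValRat.neg,
      padicValRat.div (p := p)
        (div_ne_zero (mul_ne_zero (mul_ne_zero hb hCq) hXp) hY0) hX0,
      padicValRat.div (p := p) (mul_ne_zero (mul_ne_zero hb hCq) hXp) hY0,
      padicValRat.mul (p := p) (mul_ne_zero hb hCq) hXp,
      padicValRat.mul (p := p) hb hCq, fX, fXp, fY]
    have hprod : 2 * L ≤ L * (n + 1 - i) := by
      have h2 : 2 ≤ n + 1 - i := by omega
      calc 2 * L = L * 2 := by ring
        _ ≤ L * (n + 1 - i) := Nat.mul_le_mul (le_refl L) h2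
    have hden : (bernoulli i).den ≤ D := by
      rw [hD]
      exact Finset.single_le_sum (f := fun j => (bernoulli j).den)
        (fun j _ => Nat.zero_le _) (Finset.mem_range.mpr hin)
    have hLdef : L = 1 + m + padicValNat p (n + 1) + D := hL
    have hprod' : (2 : ℤ) * L ≤ ((L * (n + 1 - i) : ℕ) : ℤ) := by exact_mod_cast hprod
    have hden' : (((bernoulli i).den : ℕ) : ℤ) ≤ (D : ℤ) := by exact_mod_cast hden
    have hL' : (L : ℤ) = 1 + m + (padicValNat p (n + 1) : ℤ) + D := by exact_mod_cast hLdef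
    linarith [fB, fC]
  · -- the main term S / X
    have hin' : i = n := by omega
    simp only [hG, if_neg hin] at hGi ⊢
    have hXq : X = (p : ℚ) ^ L := by rw [hX]; push_cast; ring
    have fX : padicValRat p X = (L : ℤ) := by
      rw [hXq, padicValRat.pow (p : ℚ), padicValRat.self hp.one_lt, mul_one]
    have hSne : S ≠ 0 := by
      intro h
      apply hGi
      rw [h, zero_div]
    have hSint : S = ((∑ k ∈ range (p ^ L), (k : ℤ) ^ n : ℤ) : ℚ) := by
      rw [hS]; push_cast; ring
    have hZ : (∑ k ∈ range (p ^ L), (k : ℤ) ^ n) ≠ 0 := by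
      intro h
      apply hSne
      rw [hSint, h, Int.cast_zero]
    have hdvd := adams_key_sum p n hp hodd hn c hc hc1 L
    have hval : L + m ≤ padicValInt p (∑ k ∈ range (p ^ L), (k : ℤ) ^ n) := by
      rcases (padicValInt_dvd_iff (L + m) _).mp hdvd with h | h
      · exact absurd h hZ
      · exact h
    rw [padicValRat.div (p := p) hSne hX0, fX, hSint, padicValRat.of_int]
    have : ((L + m : ℕ) : ℤ) ≤ (padicValInt p (∑ k ∈ range (p ^ L), (k : ℤ) ^ n) : ℤ) := by
      exact_mod_cast hval
    push_cast at this ⊢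
    omega
end

section
/- Let n be an even positive integer and m a positive integer. Then m² divides S_n(m) if and only if m divides the numerator of B_n, where S_n(m) = Σ_{ν=0}^{m-1} ν^n. -/
/-!
Faulhaber's formula gives `S_n(m) = m B_n + T`, where
`T = ∑_{i<n} B_i (n choose i) m^(n+1-i) / (n+1-i)`. Fix a prime `p ∣ m` and let `p^e ∥ m`.
By von Staudt–Clausen `|B_i|_p ≤ p`, and since `n` is even the term of `T` with
`n + 1 - i = 2` is `B_{n-1} (n/2) m²` with `B_{n-1} ∈ {0, -1/2}`; hence `|T|_p ≤ p^(-e)`, and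
even `|T|_p ≤ p^(-2e)` when `p ≥ 5`. For `p ≥ 5` this turns `p^(2e) ∣ S_n(m)` into
`|B_n|_p ≤ p^(-e)`, i.e. `p^e ∣ num B_n`. For `p ∈ {2, 3}` we have `p - 1 ∣ n`, so
`|B_n|_p = p`: then `|S_n(m)|_p = p^(1-e)` and `p ∤ num B_n`, and both sides fail.
-/

open Finset IsAbsoluteValue

theorem padicNorm_natCast_eq_zpow {p j : ℕ} (hj : j ≠ 0) :
    padicNorm p j = (p : ℚ) ^ (-(padicValNat p j : ℤ)) := by
  rw [padicNorm.eq_zpow_of_nonzero (by exact_mod_cast hj), padicValRat.of_nat]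

theorem mul_padicValNat_le {p j : ℕ} (hp : 1 < p) (hj : j ≠ 0) : p * padicValNat p j ≤ j := by
  obtain hv | hv := Nat.eq_zero_or_pos (padicValNat p j)
  · simp [hv]
  calc p * padicValNat p j ≤ p * p ^ (padicValNat p j - 1) :=
        Nat.mul_le_mul_left p (by have := Nat.lt_pow_self (n := padicValNat p j - 1) hp; omega)
    _ = p ^ padicValNat p j := by rw [← pow_succ', Nat.sub_add_cancel hv]
    _ ≤ j := Nat.le_of_dvd (Nat.pos_of_ne_zero hj) pow_padicValNat_dvd

theorem Int.natCast_dvd_iff_forall_pow_factorization_dvd {m : ℕ} (hm : m ≠ 0) {a : ℤ} :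
    (m : ℤ) ∣ a ↔ ∀ p ∈ m.primeFactors, (p : ℤ) ^ m.factorization p ∣ a := by
  refine ⟨fun h p _ => ?_, fun h => ?_⟩
  · exact (Int.natCast_dvd_natCast.mpr (Nat.ordProj_dvd m p)).trans (by exact_mod_cast h)
  rw [← Nat.prod_factorization_pow_eq_self hm, Nat.prod_factorization_eq_prod_primeFactors,
    Nat.cast_prod]
  refine prod_dvd_of_coprime (fun p hp q hq hpq => ?_) (by simpa using h)
  exact Nat.isCoprime_iff_coprime.mpr <| Nat.coprime_pow_primes _ _
    (Nat.prime_of_mem_primeFactors hp) (Nat.prime_of_mem_primeFactors hq) hpq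

noncomputable def faulhaberTail (n m : ℕ) : ℚ :=
  ∑ i ∈ range n, bernoulli i * n.choose i * (m : ℚ) ^ (n + 1 - i) / (n + 1 - i : ℕ)

theorem sum_range_pow_eq_mul_bernoulli_add_faulhaberTail (n m : ℕ) :
    ∑ k ∈ range m, (k : ℚ) ^ n = m * bernoulli n + faulhaberTail n m := by
  rw [sum_range_pow, sum_range_succ, faulhaberTail, add_comm]
  congr 1
  · rw [Nat.choose_succ_self_right, Nat.add_sub_cancel_left, pow_one]
    push_cast
    field_simp
  · refine sum_congr rfl fun i hi => ?_
    have hin : i < n + 1 := by have := mem_range.mp hi; omega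
    have key : (n.choose i : ℚ) * (n + 1) = (n + 1).choose i * (n + 1 - i : ℕ) := by
      exact_mod_cast Nat.choose_mul_succ_eq n i
    have hj : ((n + 1 - i : ℕ) : ℚ) ≠ 0 := by exact_mod_cast (Nat.sub_pos_of_lt hin).ne'
    field_simp
    linear_combination -bernoulli i * (m : ℚ) ^ (n + 1 - i) * key

theorem padicNorm_bernoulli_le_of_odd {p i : ℕ} (hi : Odd i) :
    padicNorm p (bernoulli i) ≤ padicNorm p (2 : ℚ)⁻¹ := by
  obtain rfl | hi1 := eq_or_ne i 1
  · rw [bernoulli_one, neg_div, padicNorm.neg, one_div]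
  · rw [bernoulli_eq_zero_of_odd hi (by have := hi.pos; omega), padicNorm.zero]
    exact padicNorm.nonneg _

section PadicNorm

variable {p : ℕ} [Fact p.Prime]

theorem one_lt_natCast_prime : (1 : ℚ) < p := by exact_mod_cast (Fact.out : p.Prime).one_lt

theorem padicNorm_natCast_eq_zpow_factorization {m : ℕ} (hm : m ≠ 0) :
    padicNorm p m = (p : ℚ) ^ (-(m.factorization p : ℤ)) := by
  rw [padicNorm_natCast_eq_zpow hm, Nat.factorization_def m Fact.out]

theorem padicNorm_inv_prime : padicNorm p (p : ℚ)⁻¹ = p := by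
  rw [abv_inv (padicNorm p), padicNorm.padicNorm_p_of_prime, inv_inv]

theorem padicNorm_two_inv_of_ne (hp2 : p ≠ 2) : padicNorm p (2 : ℚ)⁻¹ = 1 := by
  rw [abv_inv (padicNorm p), show (2 : ℚ) = (2 : ℕ) by norm_num,
    padicNorm.padicNorm_of_prime_of_ne hp2, inv_one]

theorem padicNorm_two_inv_le : padicNorm p (2 : ℚ)⁻¹ ≤ p := by
  obtain rfl | hp2 := eq_or_ne p 2
  · exact_mod_cast padicNorm_inv_prime.le
  · rw [padicNorm_two_inv_of_ne hp2]
    exact one_lt_natCast_prime.le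

theorem padicNorm_le_iff_of_sub_le {x y c : ℚ} (h : padicNorm p (x - y) ≤ c) :
    padicNorm p x ≤ c ↔ padicNorm p y ≤ c := by
  constructor <;> intro hc
  · simpa using padicNorm.sub (p := p) (q := x) (r := x - y) |>.trans (max_le hc h)
  · simpa using padicNorm.nonarchimedean (p := p) (q := x - y) (r := y) |>.trans (max_le h hc)

theorem Rat.pow_dvd_num_iff_padicNorm_le {x : ℚ} {e : ℕ} (he : e ≠ 0) :
    (p : ℤ) ^ e ∣ x.num ↔ padicNorm p x ≤ (p : ℚ) ^ (-(e : ℤ)) := by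
  have hx : padicNorm p x = padicNorm p x.num / padicNorm p x.den := by
    rw [← padicNorm.div, Rat.num_div_den]
  rw [← Nat.cast_pow, padicNorm.dvd_iff_norm_le]
  constructor
  · intro hnum
    have hden : padicNorm p x.den = 1 := by
      refine (padicNorm.nat_eq_one_iff _).mpr fun hpden => ?_
      have hpnum : p ∣ x.num.natAbs := Int.natCast_dvd.mp <|
        (dvd_pow_self (p : ℤ) he).trans <| (padicNorm.dvd_iff_norm_le.mpr hnum).trans (by simp)
      exact (Fact.out : p.Prime).one_lt.ne'
        (Nat.eq_one_of_dvd_one (x.reduced ▸ Nat.dvd_gcd hpnum hpden))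
    rwa [hx, hden, div_one]
  · intro hle
    calc padicNorm p x.num = padicNorm p x * padicNorm p x.den := by
          rw [hx, div_mul_cancel₀ _ (padicNorm.nonzero (p := p) (mod_cast x.den_ne_zero))]
      _ ≤ padicNorm p x * 1 := by gcongr; exacts [padicNorm.nonneg _, padicNorm.of_nat _]
      _ ≤ _ := by rwa [mul_one]

theorem padicNorm_bernoulli_add_inv_le_one {n : ℕ} (hn : Even n) (hn0 : n ≠ 0) :
    padicNorm p (bernoulli n + if p - 1 ∣ n then (p : ℚ)⁻¹ else 0) ≤ 1 := by
  obtain ⟨k, rfl⟩ := hn.two_dvd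
  obtain ⟨T, hT⟩ := Bernoulli.vonStaudt_clausen k
  set s := (range (2 * k + 2)).filter fun q => q.Prime ∧ q - 1 ∣ 2 * k
  have hsplit : ∑ q ∈ s, (1 : ℚ) / q =
      (if p - 1 ∣ 2 * k then (p : ℚ)⁻¹ else 0) + ∑ q ∈ s.erase p, (1 : ℚ) / q := by
    split_ifs with hpk
    · have hps : p ∈ s := mem_filter.mpr ⟨mem_range.mpr <| by
        have := Nat.le_of_dvd (by omega) hpk; omega, Fact.out, hpk⟩
      rw [← add_sum_erase s _ hps, one_div]
    · rw [erase_eq_of_notMem fun hps => hpk (mem_filter.mp hps).2.2, zero_add]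
  rw [show bernoulli (2 * k) + (if p - 1 ∣ 2 * k then (p : ℚ)⁻¹ else 0) =
      T - ∑ q ∈ s.erase p, (1 : ℚ) / q by rw [hT, hsplit]; ring]
  refine padicNorm.sub.trans <| max_le (padicNorm.of_int T) <|
    padicNorm.sum_le' (fun q hq => ?_) zero_le_one
  obtain ⟨hqp, hq⟩ := mem_erase.mp hq
  have : Fact q.Prime := ⟨(mem_filter.mp hq).2.1⟩
  rw [one_div, abv_inv (padicNorm p), padicNorm.padicNorm_of_prime_of_ne (Ne.symm hqp),
    inv_one]

theorem padicNorm_bernoulli_le_s10 (i : ℕ) : padicNorm p (bernoulli i) ≤ p := by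
  obtain hi | hi := Nat.even_or_odd i
  · obtain rfl | hi0 := eq_or_ne i 0
    · simpa using one_lt_natCast_prime.le
    set c : ℚ := if p - 1 ∣ i then (p : ℚ)⁻¹ else 0
    have hc : padicNorm p c ≤ p := by
      unfold c; split_ifs
      exacts [padicNorm_inv_prime.le, by simp]
    calc padicNorm p (bernoulli i) = padicNorm p ((bernoulli i + c) - c) := by ring_nf
      _ ≤ p := padicNorm.sub.trans <| max_le
          ((padicNorm_bernoulli_add_inv_le_one hi hi0).trans one_lt_natCast_prime.le) hc
  · exact (padicNorm_bernoulli_le_of_odd hi).trans padicNorm_two_inv_le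

theorem padicNorm_bernoulli_of_sub_one_dvd {n : ℕ} (hn : Even n) (hn0 : n ≠ 0)
    (hpn : p - 1 ∣ n) : padicNorm p (bernoulli n) = p := by
  have h := padicNorm_bernoulli_add_inv_le_one (p := p) hn hn0
  rw [if_pos hpn] at h
  have hlt : padicNorm p (bernoulli n + (p : ℚ)⁻¹) < padicNorm p (-(p : ℚ)⁻¹) := by
    rw [padicNorm.neg, padicNorm_inv_prime]
    exact h.trans_lt one_lt_natCast_prime
  calc padicNorm p (bernoulli n)
        = padicNorm p ((bernoulli n + (p : ℚ)⁻¹) + -(p : ℚ)⁻¹) := by ring_nf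
    _ = p := by
      rw [padicNorm.add_eq_max_of_ne hlt.ne, max_eq_right hlt.le, padicNorm.neg,
        padicNorm_inv_prime]

theorem padicNorm_pow_le_of_pow_dvd {m e : ℕ} (hm : p ^ e ∣ m) (j : ℕ) :
    padicNorm p ((m : ℚ) ^ j) ≤ (p : ℚ) ^ (-(e * j : ℤ)) := by
  have h : ((p ^ (e * j) : ℕ) : ℤ) ∣ ((m ^ j : ℕ) : ℤ) :=
    Int.natCast_dvd_natCast.mpr (pow_mul p e j ▸ pow_dvd_pow_of_dvd hm j)
  exact_mod_cast padicNorm.dvd_iff_norm_le.mp h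

/-- The term of index `i` has denominator `j = n + 1 - i`. For `j ≥ 3` it is bounded by
`p · p^(-e j) · p^(v_p j)`; the term with `j = 2` equals `B_{n-1} (n/2) m²`. -/
theorem padicNorm_faulhaberTail_le {n m e : ℕ} {K : ℤ} (hn : Even n) (hm : p ^ e ∣ m)
    (h_two : padicNorm p (2 : ℚ)⁻¹ * (p : ℚ) ^ (-(2 * e : ℤ)) ≤ (p : ℚ) ^ (-K))
    (h_ge_three : ∀ j, 3 ≤ j → 1 + padicValNat p j - e * j ≤ -K) :
    padicNorm p (faulhaberTail n m) ≤ (p : ℚ) ^ (-K) := by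
  have hp0 : (p : ℚ) ≠ 0 := (zero_lt_one.trans one_lt_natCast_prime).ne'
  refine padicNorm.sum_le' (fun i hi => ?_) (by positivity)
  have hi := mem_range.mp hi
  obtain hij | rfl : i + 1 < n ∨ i = n - 1 := by omega
  · set j := n + 1 - i
    have hj : j ≠ 0 := by omega
    have hB : padicNorm p (bernoulli i) ≤ (p : ℚ) ^ (1 : ℤ) :=
      (zpow_one (p : ℚ)).symm ▸ padicNorm_bernoulli_le_s10 i
    have hC : padicNorm p (n.choose i : ℕ) ≤ 1 := padicNorm.of_nat _
    have hM := padicNorm_pow_le_of_pow_dvd hm j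
    calc padicNorm p (bernoulli i * n.choose i * (m : ℚ) ^ j / (j : ℕ))
        = padicNorm p (bernoulli i) * padicNorm p (n.choose i : ℕ) * padicNorm p ((m : ℚ) ^ j)
            * (p : ℚ) ^ (padicValNat p j : ℤ) := by
          rw [padicNorm.div, padicNorm.mul, padicNorm.mul, padicNorm_natCast_eq_zpow hj,
            div_eq_mul_inv, ← zpow_neg, neg_neg]
      _ ≤ (p : ℚ) ^ (1 : ℤ) * 1 * (p : ℚ) ^ (-(e * j : ℤ))
            * (p : ℚ) ^ (padicValNat p j : ℤ) := by
          gcongr <;> exact padicNorm.nonneg _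
      _ = (p : ℚ) ^ (1 + padicValNat p j - e * j : ℤ) := by
          rw [mul_one, ← zpow_add₀ hp0, ← zpow_add₀ hp0]; ring_nf
      _ ≤ (p : ℚ) ^ (-K) :=
          zpow_le_zpow_right₀ one_lt_natCast_prime.le (h_ge_three j (by omega))
  · obtain ⟨k, rfl⟩ := hn.two_dvd
    have hsq : bernoulli (2 * k - 1) * (2 * k).choose (2 * k - 1) *
        (m : ℚ) ^ (2 * k + 1 - (2 * k - 1)) / (2 * k + 1 - (2 * k - 1) : ℕ) =
        bernoulli (2 * k - 1) * (k : ℕ) * (m : ℚ) ^ 2 := by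
      rw [Nat.choose_symm_of_eq_add (b := 1) (by omega), Nat.choose_one_right,
        show 2 * k + 1 - (2 * k - 1) = 2 by omega]
      push_cast
      field_simp
    have hB := padicNorm_bernoulli_le_of_odd (p := p) (i := 2 * k - 1) ⟨k - 1, by omega⟩
    have hk : padicNorm p (k : ℕ) ≤ 1 := padicNorm.of_nat _
    have hM : padicNorm p ((m : ℚ) ^ 2) ≤ (p : ℚ) ^ (-(2 * e : ℤ)) := by
      simpa [mul_comm] using padicNorm_pow_le_of_pow_dvd hm 2
    rw [hsq, padicNorm.mul, padicNorm.mul, mul_assoc]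
    refine le_trans (mul_le_mul hB ?_
      (mul_nonneg (padicNorm.nonneg _) (padicNorm.nonneg _)) (padicNorm.nonneg _)) h_two
    simpa using mul_le_mul hk hM (padicNorm.nonneg _) zero_le_one

theorem padicNorm_faulhaberTail_le_of_pow_dvd {n m e : ℕ} (hn : Even n) (hm : p ^ e ∣ m)
    (he : e ≠ 0) : padicNorm p (faulhaberTail n m) ≤ (p : ℚ) ^ (-(e : ℤ)) := by
  have hp : (1 : ℚ) < p := one_lt_natCast_prime
  refine padicNorm_faulhaberTail_le hn hm ?_ fun j hj => ?_
  · calc padicNorm p (2 : ℚ)⁻¹ * (p : ℚ) ^ (-(2 * e : ℤ))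
        ≤ (p : ℚ) ^ (1 : ℤ) * (p : ℚ) ^ (-(2 * e : ℤ)) := by
          rw [zpow_one]; gcongr; exact padicNorm_two_inv_le
      _ = (p : ℚ) ^ (1 - 2 * e : ℤ) := by rw [← zpow_add₀ (by positivity)]; ring_nf
      _ ≤ (p : ℚ) ^ (-(e : ℤ)) := zpow_le_zpow_right₀ hp.le (by omega)
  · have hv := mul_padicValNat_le (Fact.out : p.Prime).one_lt (j := j) (by omega)
    have hv2 : padicValNat p j + 2 ≤ j := by
      have := Nat.mul_le_mul_right (padicValNat p j) (Fact.out : p.Prime).two_le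
      omega
    have he1 : (1 : ℤ) ≤ e := by omega
    have hj1 : (1 : ℤ) ≤ j := by omega
    have : (padicValNat p j : ℤ) + 2 ≤ j := by exact_mod_cast hv2
    nlinarith [mul_nonneg (sub_nonneg.mpr he1) (sub_nonneg.mpr hj1)]

theorem padicNorm_faulhaberTail_le_of_five_le (hp5 : 5 ≤ p) {n m e : ℕ} (hn : Even n)
    (hm : p ^ e ∣ m) (he : e ≠ 0) :
    padicNorm p (faulhaberTail n m) ≤ (p : ℚ) ^ (-(2 * e : ℤ)) := by
  refine padicNorm_faulhaberTail_le hn hm ?_ fun j hj => ?_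
  · rw [padicNorm_two_inv_of_ne (by omega), one_mul]
  · have hv := mul_padicValNat_le (Fact.out : p.Prime).one_lt (j := j) (by omega)
    have hv3 : padicValNat p j + 3 ≤ j := by
      have := Nat.mul_le_mul_right (padicValNat p j) hp5
      omega
    have he1 : (1 : ℤ) ≤ e := by omega
    have hj2 : (2 : ℤ) ≤ j := by omega
    have : (padicValNat p j : ℤ) + 3 ≤ j := by exact_mod_cast hv3
    nlinarith [mul_nonneg (sub_nonneg.mpr he1) (sub_nonneg.mpr hj2)]

theorem pow_dvd_sum_range_pow_iff {n m k : ℕ} :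
    (p : ℤ) ^ k ∣ ∑ ν ∈ range m, (ν : ℤ) ^ n ↔
      padicNorm p (m * bernoulli n + faulhaberTail n m) ≤ (p : ℚ) ^ (-(k : ℤ)) := by
  rw [← Nat.cast_pow, padicNorm.dvd_iff_norm_le,
    ← sum_range_pow_eq_mul_bernoulli_add_faulhaberTail]
  push_cast
  rfl

theorem pow_two_mul_factorization_dvd_sum_range_pow_iff_of_five_le (hp5 : 5 ≤ p) {n m : ℕ}
    (hn : Even n) (hm : m ≠ 0) (hpm : p ∣ m) :
    (p : ℤ) ^ (2 * m.factorization p) ∣ ∑ ν ∈ range m, (ν : ℤ) ^ n ↔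
      (p : ℤ) ^ m.factorization p ∣ (bernoulli n).num := by
  have he := (Nat.Prime.factorization_pos_of_dvd Fact.out hm hpm).ne'
  have htail := padicNorm_faulhaberTail_le_of_five_le hp5 hn (Nat.ordProj_dvd m p) he
  have hp0 : (0 : ℚ) < p := zero_lt_one.trans one_lt_natCast_prime
  rw [pow_dvd_sum_range_pow_iff, Rat.pow_dvd_num_iff_padicNorm_le he,
    padicNorm_le_iff_of_sub_le (y := m * bernoulli n) (by simpa using htail), padicNorm.mul,
    padicNorm_natCast_eq_zpow_factorization hm, Nat.cast_mul, Nat.cast_two,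
    two_mul, neg_add, zpow_add₀ hp0.ne', mul_le_mul_iff_right₀ (zpow_pos hp0 _)]

theorem not_pow_factorization_dvd_sum_range_pow {n m : ℕ} (hn : Even n) (hn0 : n ≠ 0)
    (hpn : p - 1 ∣ n) (hm : m ≠ 0) (hpm : p ∣ m) :
    ¬ (p : ℤ) ^ m.factorization p ∣ ∑ ν ∈ range m, (ν : ℤ) ^ n := by
  have he := (Nat.Prime.factorization_pos_of_dvd Fact.out hm hpm).ne'
  have htail := padicNorm_faulhaberTail_le_of_pow_dvd hn (Nat.ordProj_dvd m p) he
  rw [pow_dvd_sum_range_pow_iff,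
    padicNorm_le_iff_of_sub_le (y := m * bernoulli n) (by simpa using htail), padicNorm.mul,
    padicNorm_natCast_eq_zpow_factorization hm,
    padicNorm_bernoulli_of_sub_one_dvd hn hn0 hpn, not_le]
  exact lt_mul_of_one_lt_right (zpow_pos (zero_lt_one.trans one_lt_natCast_prime) _)
    one_lt_natCast_prime

theorem not_dvd_bernoulli_num {n : ℕ} (hn : Even n) (hn0 : n ≠ 0) (hpn : p - 1 ∣ n) :
    ¬ (p : ℤ) ∣ (bernoulli n).num := by
  have hp : (1 : ℚ) < p := one_lt_natCast_prime
  rw [← pow_one (p : ℤ), Rat.pow_dvd_num_iff_padicNorm_le one_ne_zero,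
    padicNorm_bernoulli_of_sub_one_dvd hn hn0 hpn, not_le, Nat.cast_one, zpow_neg_one]
  exact (inv_lt_one_of_one_lt₀ hp).trans hp

theorem pow_two_mul_factorization_dvd_sum_range_pow_iff {n m : ℕ} (hn : Even n) (hn0 : n ≠ 0)
    (hm : m ≠ 0) (hpm : p ∣ m) :
    (p : ℤ) ^ (2 * m.factorization p) ∣ ∑ ν ∈ range m, (ν : ℤ) ^ n ↔
      (p : ℤ) ^ m.factorization p ∣ (bernoulli n).num := by
  by_cases hp23 : p = 2 ∨ p = 3
  · have hpn : p - 1 ∣ n := by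
      rcases hp23 with rfl | rfl
      exacts [one_dvd n, hn.two_dvd]
    have he := (Nat.Prime.factorization_pos_of_dvd Fact.out hm hpm).ne'
    exact iff_of_false
      (fun h => not_pow_factorization_dvd_sum_range_pow hn hn0 hpn hm hpm <|
        (pow_dvd_pow _ (by omega)).trans h)
      (fun h => not_dvd_bernoulli_num hn hn0 hpn <| (dvd_pow_self _ he).trans h)
  · push Not at hp23
    exact pow_two_mul_factorization_dvd_sum_range_pow_iff_of_five_le
      ((Fact.out : p.Prime).five_le_of_ne_two_of_ne_three hp23.1 hp23.2) hn hm hpm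

end PadicNorm

/-- `m² ∣ S_n(m) ↔ m ∣ numerator(B_n)` for even positive `n`. -/
theorem sq_dvd_power_sum_iff (n m : ℕ) (hn : 0 < n) (hne : Even n) (hm : 0 < m) :
    (m : ℤ) ^ 2 ∣ (∑ ν ∈ Finset.range m, (ν : ℤ) ^ n) ↔ (m : ℤ) ∣ (bernoulli n).num := by
  rw [← Nat.cast_pow, Int.natCast_dvd_iff_forall_pow_factorization_dvd (pow_ne_zero 2 hm.ne'),
    Int.natCast_dvd_iff_forall_pow_factorization_dvd hm.ne', Nat.primeFactors_pow m two_ne_zero]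
  refine forall₂_congr fun p hp => ?_
  have : Fact p.Prime := ⟨Nat.prime_of_mem_primeFactors hp⟩
  rw [Nat.factorization_pow, Finsupp.smul_apply, smul_eq_mul]
  exact pow_two_mul_factorization_dvd_sum_range_pow_iff hne hn.ne' hm.ne'
    (Nat.dvd_of_mem_primeFactors hp)
end

section
/- Let n be an even positive integer and m a positive integer. Then m³ divides S_n(m) if and only if m² divides B_n, where S_n(m) = Σ_{ν=0}^{m-1} ν^n and divisibility of B_n by m² means ord_p(B_n) ≥ 2·ord_p(m) for all primes p | m. -/
/-!
Fix a prime `p ∣ m` and write `v = v_p(m) ≥ 1`. Faulhaber's formula gives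
`S_n(m) = B_n m + binom(n,2) B_{n-2} m³/3 + (terms divisible by p^{3v})`, the `B_{n-1}` term
vanishing; the tail is controlled by von Staudt–Clausen (`p B_i` is `p`-integral). So
`m³ ∣ S_n(m)` at `p` compares `B_n m` with `m³`, unless the middle term gets in the way:
* if `p - 1 ∣ n`, then `v_p(B_n) = -1`, `B_n m` dominates and both sides fail;
* if `binom(n,2) B_{n-2}` is `p`-integral, `S_n(m) ≡ B_n m (mod p^{3v})` and the sides agree;
* otherwise `p - 1 ∣ n - 2` and `p ∤ n`, and then `p ∤ B_n` by Voronoi's congruence with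
  multiplier `2`; again `B_n m` dominates and both sides fail.
The case `n = 2`, where `B_{n-1} ≠ 0`, follows from `6 S_2(m) = 2m³ - 3m² + m`.
-/

open Finset WithZero

lemma WithZero.one_lt_exp_one : (1 : ℤᵐ⁰) < exp 1 := by
  rw [← exp_zero, exp_lt_exp]; exact one_pos

lemma WithZero.exp_neg_one_lt_one : exp (-1 : ℤ) < 1 := by
  rw [← exp_zero, exp_lt_exp]; exact neg_one_lt_zero

lemma WithZero.pow_le_exp_neg {μ : ℤᵐ⁰} (hμ : μ ≤ exp (-1)) (k : ℕ) :
    μ ^ k ≤ exp (-(k : ℤ)) := by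
  refine (pow_le_pow_left₀ zero_le hμ k).trans_eq ?_
  rw [← exp_nsmul]
  simp

section Valuation

variable {R Γ₀ : Type*} [CommRing R] [LinearOrderedCommGroupWithZero Γ₀]
  (v : Valuation R Γ₀) {s b x : R}

lemma Valuation.le_pow_three_iff_of_sub_le (hx : v x ≠ 0) (h : v (s - b * x) ≤ v x ^ 3) :
    v s ≤ v x ^ 3 ↔ v b ≤ v x ^ 2 := by
  rw [← mul_le_mul_iff_left₀ (zero_lt_iff.2 hx) (b := v b), ← pow_succ, ← map_mul]
  exact ⟨fun hs => by simpa using v.map_sub_le hs h, fun hb => by simpa using v.map_add_le h hb⟩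

lemma Valuation.le_pow_three_iff_of_sub_lt (hx : v x ≠ 0) (h : v (s - b * x) < v (b * x))
    (hb : v x ^ 2 < v b) : v s ≤ v x ^ 3 ↔ v b ≤ v x ^ 2 := by
  refine iff_of_false ?_ hb.not_ge
  rw [v.map_eq_of_sub_lt h, map_mul, not_le, pow_succ]
  exact mul_lt_mul_of_pos_right hb (zero_lt_iff.2 hx)

end Valuation

lemma Int.dvd_iff_forall_padicValuation_le {a b : ℤ} (ha : a ≠ 0) :
    a ∣ b ↔
      ∀ (p : ℕ) [Fact p.Prime], Rat.padicValuation p b ≤ Rat.padicValuation p a := by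
  rw [← Rat.den_div_intCast_eq_one_iff b a ha, Nat.eq_one_iff_not_exists_prime_dvd]
  refine forall_congr' fun p => ⟨fun h _ => ?_, fun h hp => ?_⟩
  · have := Rat.padicValuation_le_one_iff.2 (h Fact.out)
    rwa [map_div₀, div_le_one₀ ((Valuation.pos_iff _).2 (by exact_mod_cast ha))] at this
  · have := Fact.mk hp
    rw [← Rat.padicValuation_le_one_iff, map_div₀,
      div_le_one₀ ((Valuation.pos_iff _).2 (by exact_mod_cast ha))]
    exact h

lemma sum_range_mul_mod {M : Type*} [AddCommMonoid M] {a p : ℕ} (ha : a.Coprime p)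
    (f : ℕ → M) :
    ∑ i ∈ range p, f (a * i % p) = ∑ i ∈ range p, f i := by
  have hinj : Set.InjOn (fun i => a * i % p) (range p) := fun x hx y hy h =>
    Nat.ModEq.eq_of_lt_of_lt (Nat.ModEq.cancel_left_of_coprime (Nat.coprime_comm.1 ha) h)
      (mem_range.1 hx) (mem_range.1 hy)
  have himg : (range p).image (fun i => a * i % p) = range p := by
    refine eq_of_subset_of_card_le (fun x hx => ?_) (card_image_of_injOn hinj).ge
    obtain ⟨i, hi, rfl⟩ := mem_image.1 hx
    exact mem_range.2 (Nat.mod_lt _ (by have := mem_range.1 hi; omega))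
  conv_rhs => rw [← himg, sum_image hinj]

-- Voronoi's congruence for the multiplier `2`.
lemma sq_dvd_two_pow_sub_one_mul_sum_range_pow_sub {p : ℕ} (hp : Odd p) (n : ℕ) :
    (p : ℤ) ^ 2 ∣ (2 ^ n - 1) * ∑ i ∈ range p, (i : ℤ) ^ n -
      n * 2 ^ (n - 1) * p * ∑ i ∈ range p with p < 2 * i, (i : ℤ) ^ (n - 1) := by
  have hperm :
      ∑ i ∈ range p, ((2 * i % p : ℕ) : ℤ) ^ n = ∑ i ∈ range p, (i : ℤ) ^ n :=
    sum_range_mul_mod (Nat.coprime_two_left.2 hp) (fun k => (k : ℤ) ^ n)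
  have hterm : ∀ i ∈ range p, (p : ℤ) ^ 2 ∣
      ((2 * i % p : ℕ) : ℤ) ^ n - (2 * (i : ℤ)) ^ n +
        if p < 2 * i then (n : ℤ) * (2 * i) ^ (n - 1) * p else 0 := by
    intro i hi
    have hi := mem_range.1 hi
    split_ifs with h
    · have hmod : ((2 * i % p : ℕ) : ℤ) = 2 * i + -p := by
        rw [Nat.mod_eq_sub_mod h.le, Nat.mod_eq_of_lt (by omega), Nat.cast_sub h.le]
        push_cast; ring
      have := sq_dvd_add_pow_sub_sub (-(p : ℤ)) (2 * i) n
      rw [neg_sq] at this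
      obtain ⟨c, hc⟩ := this
      exact ⟨c, by rw [hmod, ← hc]; ring⟩
    · have := Nat.odd_iff.1 hp
      rw [Nat.mod_eq_of_lt (by omega)]
      push_cast
      simp
  have hdouble :
      ∑ i ∈ range p, (2 * (i : ℤ)) ^ n = 2 ^ n * ∑ i ∈ range p, (i : ℤ) ^ n := by
    simp only [mul_pow, mul_sum]
  have hhalf : ∑ i ∈ range p with p < 2 * i, (n : ℤ) * (2 * i) ^ (n - 1) * p =
      n * 2 ^ (n - 1) * p * ∑ i ∈ range p with p < 2 * i, (i : ℤ) ^ (n - 1) := by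
    rw [mul_sum]; refine sum_congr rfl fun i _ => by ring
  obtain ⟨c, hc⟩ := dvd_sum hterm
  rw [sum_add_distrib, sum_sub_distrib, hperm, ← sum_filter, hdouble, hhalf] at hc
  exact ⟨-c, by linear_combination -hc⟩

lemma six_mul_sum_range_sq (m : ℕ) :
    6 * ∑ k ∈ range m, (k : ℚ) ^ 2 = 2 * m ^ 3 - 3 * m ^ 2 + m := by
  induction m with
  | zero => simp
  | succ m ih => rw [sum_range_succ, mul_add, ih]; push_cast; ring

noncomputable def faulhaberTerm (m n i : ℕ) : ℚ :=
  bernoulli i * n.choose i * (m : ℚ) ^ (n + 1 - i) / (n + 1 - i : ℕ)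

lemma sum_range_pow_eq_sum_faulhaberTerm (m n : ℕ) :
    ∑ k ∈ range m, (k : ℚ) ^ n = ∑ i ∈ range (n + 1), faulhaberTerm m n i := by
  rw [sum_range_pow]
  refine sum_congr rfl fun i hi => ?_
  have hi : i ≤ n := Nat.lt_succ_iff.1 (mem_range.1 hi)
  have key : (n.choose i : ℚ) * (n + 1) = (n + 1).choose i * (n + 1 - i : ℕ) := by
    exact_mod_cast Nat.choose_mul_succ_eq n i
  rw [faulhaberTerm, div_eq_div_iff (by positivity) (by norm_cast; omega)]
  linear_combination (-(bernoulli i * (m : ℚ) ^ (n + 1 - i))) * key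

lemma faulhaberTerm_self (m n : ℕ) : faulhaberTerm m n n = bernoulli n * m := by
  simp [faulhaberTerm]

lemma faulhaberTerm_one (m : ℕ) {n : ℕ} (hn : 1 ≤ n) :
    faulhaberTerm m n 1 = bernoulli 1 * (m : ℚ) ^ n := by
  have : (n : ℚ) ≠ 0 := by positivity
  rw [faulhaberTerm, Nat.choose_one_right, Nat.add_sub_cancel]
  field_simp

lemma faulhaberTerm_sub_two (m : ℕ) {n : ℕ} (hn : 2 ≤ n) :
    faulhaberTerm m n (n - 2) = bernoulli (n - 2) * n.choose 2 * (m : ℚ) ^ 3 / 3 := by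
  rw [faulhaberTerm, show n + 1 - (n - 2) = 3 by omega, Nat.choose_symm hn]
  norm_num

lemma faulhaberTerm_of_odd (m n : ℕ) {i : ℕ} (hi : Odd i) (h1 : 1 < i) :
    faulhaberTerm m n i = 0 := by
  simp [faulhaberTerm, bernoulli_eq_zero_of_odd hi h1]

lemma sum_range_pow_eq_add (m : ℕ) {n : ℕ} (hn : 4 ≤ n) (he : Even n) :
    ∑ k ∈ range m, (k : ℚ) ^ n =
      ∑ i ∈ range (n - 2), faulhaberTerm m n i + faulhaberTerm m n (n - 2) +
        bernoulli n * m := by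
  have hodd : Odd (n - 1) := by obtain ⟨k, rfl⟩ := he; exact ⟨k - 1, by omega⟩
  rw [sum_range_pow_eq_sum_faulhaberTerm, show n + 1 = n - 2 + 1 + 1 + 1 by omega,
    sum_range_succ, sum_range_succ, sum_range_succ, show n - 2 + 1 = n - 1 by omega,
    show n - 2 + 2 = n by omega, faulhaberTerm_of_odd m n hodd (by omega), add_zero,
    faulhaberTerm_self]

section PadicValuation

variable {p : ℕ} [Fact p.Prime]

-- The `p`-adic valuation, written multiplicatively: `ν x ≤ exp (-k)` says that `p ^ k ∣ x`.
local notation "ν" => Rat.padicValuation p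

lemma padicValuation_natCast {n : ℕ} (hn : n ≠ 0) : ν n = exp (-(padicValNat p n : ℤ)) := by
  simp [Rat.padicValuation, hn]

lemma padicValuation_intCast_le_one (z : ℤ) : ν z ≤ 1 :=
  Int.padicValuation_le_one p z

lemma padicValuation_natCast_le_one (n : ℕ) : ν n ≤ 1 := by
  exact_mod_cast padicValuation_intCast_le_one (p := p) n

lemma padicValuation_ofNat_le_one (n : ℕ) [n.AtLeastTwo] : ν (OfNat.ofNat n : ℚ) ≤ 1 := by
  exact_mod_cast padicValuation_natCast_le_one n

lemma padicValuation_natCast_eq_one {n : ℕ} (h : ¬ p ∣ n) : ν n = 1 := by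
  rw [← Int.cast_natCast, Rat.padicValuation_cast, Int.padicValuation_eq_one_iff]
  exact_mod_cast h

lemma padicValuation_natCast_le_exp_neg_one {n : ℕ} (h : p ∣ n) : ν n ≤ exp (-1) := by
  rcases eq_or_ne n 0 with rfl | hn
  · simp
  rw [padicValuation_natCast hn, exp_le_exp, neg_le_neg_iff, Nat.one_le_cast]
  exact one_le_padicValNat_of_dvd hn h

lemma padicValuation_le_exp_neg_of_pow_dvd {k : ℕ} {z : ℤ} (h : (p : ℤ) ^ k ∣ z) :
    ν z ≤ exp (-(k : ℤ)) := by
  obtain ⟨c, rfl⟩ := h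
  push_cast
  rw [map_mul, map_pow, Rat.padicValuation_self, ← exp_nsmul, nsmul_eq_mul, mul_neg, mul_one]
  exact mul_le_of_le_one_right' (padicValuation_intCast_le_one c)

lemma mul_padicValNat_le_padicValRat_iff {x : ℚ} (hx : x ≠ 0) {m : ℕ} (hm : m ≠ 0)
    (k : ℕ) :
    (k * padicValNat p m : ℤ) ≤ padicValRat p x ↔ ν x ≤ ν m ^ k := by
  rw [padicValuation_natCast hm, ← exp_nsmul]
  simp [Rat.padicValuation, hx, -exp_neg]

lemma padicValNat_add_four_le_of_odd {j : ℕ} (hj : 5 ≤ j) (ho : Odd j) :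
    padicValNat p j + 4 ≤ j := by
  set v := padicValNat p j
  by_cases hv : v ≤ 1
  · omega
  have hp2 : p ≠ 2 := by
    rintro rfl
    exact (Nat.not_even_iff_odd.2 ho) (even_iff_two_dvd.2 (dvd_of_one_le_padicValNat (by omega)))
  have hp3 : 3 ≤ p := by have := (Fact.out : p.Prime).two_le; omega
  have h1 : 3 ^ v ≤ j :=
    (Nat.pow_le_pow_left hp3 v).trans (Nat.le_of_dvd (by omega) pow_padicValNat_dvd)
  have h2 : v - 2 < 3 ^ (v - 2) := Nat.lt_pow_self (by norm_num)
  have h3 : 3 ^ v = 3 ^ 2 * 3 ^ (v - 2) := by rw [← pow_add]; congr 1; omega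
  generalize 3 ^ (v - 2) = X at h2 h3
  omega

lemma padicValNat_three_le_one : padicValNat p 3 ≤ 1 := by
  rcases eq_or_ne p 3 with rfl | hp3
  · simp
  · rw [padicValNat.eq_zero_of_not_dvd fun h => hp3 ((Nat.prime_dvd_prime_iff_eq Fact.out
      Nat.prime_three).1 h)]
    exact zero_le_one

lemma eight_mul_sum_filter_pow_eq_one (hp : p ≠ 2) {n : ℕ} (hn : 2 ≤ n)
    (hd : p - 1 ∣ n - 2) :
    (8 : ZMod p) * ∑ i ∈ range p with p < 2 * i, (i : ZMod p) ^ (n - 1) = 1 := by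
  have hfermat (x : ZMod p) : x ^ (n - 1) = x := by
    obtain ⟨d, hd⟩ := hd
    rcases eq_or_ne x 0 with rfl | hx
    · exact zero_pow (by omega)
    · rw [show n - 1 = (p - 1) * d + 1 by omega, pow_succ, pow_mul,
        ZMod.pow_card_sub_one_eq_one hx, one_pow, one_mul]
  simp only [hfermat]
  have hodd : p % 2 = 1 := Nat.odd_iff.1 ((Fact.out : p.Prime).odd_of_ne_two hp)
  set h := (p + 1) / 2
  have hfilter : {i ∈ range p | p < 2 * i} = Ico h p := by
    ext i; simp only [mem_filter, mem_range, mem_Ico]; omega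
  have hsplit := sum_range_add_sum_Ico (fun i => i) (show h ≤ p by omega)
  have hA := sum_range_id_mul_two h
  have hC := sum_range_id_mul_two p
  have key : 8 * (∑ i ∈ Ico h p, i : ℕ) = (p * (3 * p - 4) + 1 : ℤ) := by
    have hh : 2 * (h : ℤ) = p + 1 := by omega
    have h1 : 1 ≤ h := by omega
    have h2 : 1 ≤ p := by omega
    zify [h1, h2] at hA hC hsplit
    push_cast
    linear_combination 4 * hC - 4 * hA + 8 * hsplit - (2 * (h : ℤ) + p - 1) * hh
  have := congrArg (Int.cast : ℤ → ZMod p) key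
  push_cast at this
  rw [hfilter, this, ZMod.natCast_self]
  ring

lemma padicValuation_sum_filter_pow_eq_one (hp : p ≠ 2) {n : ℕ} (hn : 2 ≤ n)
    (hd : p - 1 ∣ n - 2) :
    ν ((∑ i ∈ range p with p < 2 * i, (i : ℤ) ^ (n - 1) : ℤ) : ℚ) = 1 := by
  rw [Rat.padicValuation_cast, Int.padicValuation_eq_one_iff, ← ZMod.intCast_zmod_eq_zero_iff_dvd]
  intro h0
  have h8 := eight_mul_sum_filter_pow_eq_one hp hn hd
  push_cast at h0
  rw [h0, mul_zero] at h8
  exact zero_ne_one h8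

-- von Staudt–Clausen at the prime `p`.
lemma padicValuation_bernoulli_add_le_one {k : ℕ} (hk : 0 < k) :
    ν (bernoulli (2 * k) + if p - 1 ∣ 2 * k then (p : ℚ)⁻¹ else 0) ≤ 1 := by
  obtain ⟨z, hz⟩ := Bernoulli.vonStaudt_clausen k
  set P := {q ∈ range (2 * k + 2) | q.Prime ∧ q - 1 ∣ 2 * k}
  have hsplit : ∑ q ∈ P, (1 : ℚ) / q =
      (if p - 1 ∣ 2 * k then (p : ℚ)⁻¹ else 0) + ∑ q ∈ P.erase p, (1 : ℚ) / q := by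
    split_ifs with hd
    · have hp : p ∈ P := mem_filter.2
        ⟨mem_range.2 (by have := Nat.le_of_dvd (by omega) hd; omega), Fact.out, hd⟩
      rw [← add_sum_erase P _ hp, one_div]
    · rw [erase_eq_of_notMem fun h => hd (mem_filter.1 h).2.2, zero_add]
  have hrest : ν (∑ q ∈ P.erase p, (1 : ℚ) / q) ≤ 1 := by
    refine Valuation.map_sum_le _ fun q hq => ?_
    obtain ⟨hqp, hq⟩ := mem_erase.1 hq
    have hpq : ¬ p ∣ q := fun h =>
      hqp ((Nat.prime_dvd_prime_iff_eq Fact.out (mem_filter.1 hq).2.1).1 h).symm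
    rw [map_div₀, map_one, padicValuation_natCast_eq_one hpq, div_one]
  have hB : bernoulli (2 * k) + (if p - 1 ∣ 2 * k then (p : ℚ)⁻¹ else 0) =
      z - ∑ q ∈ P.erase p, (1 : ℚ) / q := by
    rw [hz, hsplit]; ring
  rw [hB]
  exact Valuation.map_sub_le _ (padicValuation_intCast_le_one z) hrest

lemma padicValuation_bernoulli_of_sub_one_dvd {n : ℕ} (hn : 0 < n) (he : Even n)
    (h : p - 1 ∣ n) : ν (bernoulli n) = exp 1 := by
  obtain ⟨k, rfl⟩ := even_iff_two_dvd.1 he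
  have hle := padicValuation_bernoulli_add_le_one (p := p) (k := k) (by omega)
  rw [if_pos h] at hle
  have hinv : ν (p : ℚ)⁻¹ = exp 1 := by
    rw [map_inv₀, Rat.padicValuation_self, exp_neg, inv_inv]
  calc ν (bernoulli (2 * k)) = ν ((bernoulli (2 * k) + (p : ℚ)⁻¹) - (p : ℚ)⁻¹) := by
        rw [add_sub_cancel_right]
    _ = exp 1 := by
        rw [Valuation.map_sub_eq_of_lt_right _ (hinv ▸ hle.trans_lt one_lt_exp_one), hinv]

lemma padicValuation_bernoulli_le_one {n : ℕ} (hn : 0 < n) (he : Even n)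
    (h : ¬ p - 1 ∣ n) : ν (bernoulli n) ≤ 1 := by
  obtain ⟨k, rfl⟩ := even_iff_two_dvd.1 he
  simpa [h] using padicValuation_bernoulli_add_le_one (p := p) (k := k) (by omega)

lemma padicValuation_bernoulli_le (i : ℕ) : ν (bernoulli i) ≤ exp 1 := by
  rcases i.even_or_odd with he | ho
  · rcases i.eq_zero_or_pos with rfl | hi
    · simpa using one_lt_exp_one.le
    by_cases h : p - 1 ∣ i
    · exact (padicValuation_bernoulli_of_sub_one_dvd hi he h).le
    · exact (padicValuation_bernoulli_le_one hi he h).trans one_lt_exp_one.le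
  · rcases eq_or_ne i 1 with rfl | hi
    · obtain rfl | hp2 := eq_or_ne p 2
      · have h2 : Rat.padicValuation 2 (2 : ℚ) = exp (-1) := by
          exact_mod_cast Rat.padicValuation_self 2
        rw [bernoulli_one, neg_div, Valuation.map_neg, map_div₀, map_one, h2, one_div, exp_neg,
          inv_inv]
      · have h2 : ¬ p ∣ 2 := fun h =>
          hp2 ((Nat.prime_dvd_prime_iff_eq Fact.out Nat.prime_two).1 h)
        rw [bernoulli_one, neg_div, Valuation.map_neg, map_div₀, map_one,
          ← Nat.cast_ofNat, padicValuation_natCast_eq_one h2, div_one]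
        exact one_lt_exp_one.le
    · rw [bernoulli_eq_zero_of_odd ho (by have := ho.pos; omega)]
      simp

lemma bernoulli_ne_zero_of_even {n : ℕ} (hn : 0 < n) (he : Even n) : bernoulli n ≠ 0 := by
  intro h
  have := padicValuation_bernoulli_of_sub_one_dvd (p := 2) hn he (by simp)
  rw [h, map_zero] at this
  exact exp_ne_zero this.symm

lemma padicValuation_faulhaberTerm_le (m : ℕ) {n i : ℕ} (hi : i ≤ n) :
    ν (faulhaberTerm m n i) ≤
      exp 1 * ν m ^ (n + 1 - i) * exp (padicValNat p (n + 1 - i) : ℤ) := by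
  rw [faulhaberTerm, map_div₀, map_mul, map_mul, map_pow,
    padicValuation_natCast (n := n + 1 - i) (by omega),
    exp_neg, div_inv_eq_mul]
  gcongr
  calc ν (bernoulli i) * ν (n.choose i) ≤ exp 1 * 1 :=
        mul_le_mul' (padicValuation_bernoulli_le i) (padicValuation_natCast_le_one _)
    _ = exp 1 := mul_one _

lemma padicValuation_faulhaberTerm_sub_two_le (m : ℕ) {n : ℕ} (hn : 2 ≤ n) :
    ν (faulhaberTerm m n (n - 2)) ≤ exp 2 * ν m ^ 3 := by
  refine (padicValuation_faulhaberTerm_le m (show n - 2 ≤ n by omega)).trans ?_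
  rw [show n + 1 - (n - 2) = 3 by omega, mul_right_comm, ← exp_add]
  gcongr
  exact exp_le_exp.2 (by have := padicValNat_three_le_one (p := p); omega)

lemma padicValuation_faulhaberTerm_sub_two (m : ℕ) (hp : p ≠ 3) {n : ℕ} (hn : 2 ≤ n) :
    ν (faulhaberTerm m n (n - 2)) = ν (bernoulli (n - 2)) * ν (n.choose 2 : ℚ) * ν m ^ 3 := by
  have h3 : ¬ p ∣ 3 := fun h => hp ((Nat.prime_dvd_prime_iff_eq Fact.out Nat.prime_three).1 h)
  have hν3 : ν 3 = 1 := by exact_mod_cast padicValuation_natCast_eq_one h3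
  rw [faulhaberTerm_sub_two m hn, map_div₀, map_mul, map_mul, map_pow, hν3, div_one]

lemma padicValuation_sum_faulhaberTerm_le {m n : ℕ} (hn : 4 ≤ n) (he : Even n) (hpm : p ∣ m) :
    ν (∑ i ∈ range (n - 2), faulhaberTerm m n i) ≤ ν m ^ 3 := by
  have hμ := padicValuation_natCast_le_exp_neg_one hpm
  refine Valuation.map_sum_le _ fun i hi => ?_
  have hi : i < n - 2 := mem_range.1 hi
  rcases i.even_or_odd with hie | hio
  · set j := n + 1 - i
    have hj5 : 5 ≤ j := by obtain ⟨a, rfl⟩ := he; obtain ⟨b, rfl⟩ := hie; omega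
    have hjo : Odd j := by
      obtain ⟨a, rfl⟩ := he; obtain ⟨b, rfl⟩ := hie; exact ⟨a - b, by omega⟩
    have hv := padicValNat_add_four_le_of_odd (p := p) hj5 hjo
    calc ν (faulhaberTerm m n i) ≤ exp 1 * ν m ^ j * exp (padicValNat p j : ℤ) :=
          padicValuation_faulhaberTerm_le m (by omega)
      _ = ν m ^ 3 * (ν m ^ (j - 3) * (exp 1 * exp (padicValNat p j : ℤ))) := by
          rw [← pow_mul_pow_sub _ (by omega : 3 ≤ j)]; ac_rfl
      _ ≤ ν m ^ 3 * (exp (-((j - 3 : ℕ) : ℤ)) * (exp 1 * exp (padicValNat p j : ℤ))) := by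
          gcongr; exact WithZero.pow_le_exp_neg hμ _
      _ ≤ ν m ^ 3 := by
          refine mul_le_of_le_one_right' ?_
          rw [← exp_add, ← exp_add, ← exp_zero, exp_le_exp]
          omega
  · rcases eq_or_ne i 1 with rfl | hi1
    · rw [faulhaberTerm_one m (by omega), map_mul, map_pow]
      calc ν (bernoulli 1) * ν m ^ n ≤ exp 1 * (ν m ^ 3 * ν m ^ (n - 3)) := by
            rw [pow_mul_pow_sub _ (by omega : 3 ≤ n)]; gcongr; exact padicValuation_bernoulli_le 1
        _ ≤ exp 1 * (ν m ^ 3 * exp (-1)) := by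
            gcongr; exact (WithZero.pow_le_exp_neg hμ _).trans (exp_le_exp.2 (by omega))
        _ = ν m ^ 3 := by rw [mul_left_comm, ← exp_add]; simp
    · rw [faulhaberTerm_of_odd m n hio (by have := hio.pos; omega), map_zero]
      exact zero_le

lemma padicValuation_sum_range_pow_sub_le {m n : ℕ} (hn : 4 ≤ n) (he : Even n) (hpm : p ∣ m)
    {g : ℤᵐ⁰} (hg : ν m ^ 3 ≤ g) (hE : ν (faulhaberTerm m n (n - 2)) ≤ g) :
    ν (∑ k ∈ range m, (k : ℚ) ^ n - bernoulli n * m) ≤ g := by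
  rw [sum_range_pow_eq_add m hn he, add_sub_cancel_right]
  exact Valuation.map_add_le _ ((padicValuation_sum_faulhaberTerm_le hn he hpm).trans hg) hE

lemma padicValuation_sum_range_prime_pow_sub_le (hp : p ≠ 3) {n : ℕ} (hn : 4 ≤ n)
    (he : Even n) :
    ν (∑ i ∈ range p, (i : ℚ) ^ n - bernoulli n * p) ≤ exp (-2) := by
  refine padicValuation_sum_range_pow_sub_le hn he dvd_rfl ?_ ?_
  · rw [Rat.padicValuation_self, ← exp_nsmul, exp_le_exp]; norm_num
  · rw [padicValuation_faulhaberTerm_sub_two p hp (by omega), Rat.padicValuation_self]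
    calc ν (bernoulli (n - 2)) * ν (n.choose 2) * exp (-1) ^ 3 ≤ exp 1 * 1 * exp (-1) ^ 3 := by
          gcongr
          exacts [padicValuation_bernoulli_le _, padicValuation_natCast_le_one _]
      _ = exp (-2) := by rw [mul_one, ← exp_nsmul, ← exp_add]; norm_num

-- The common-factor theorem: `p ∤ B_n` if `p` divides the denominator of `B_{n-2}` but not `n`.
lemma exp_neg_one_lt_padicValuation_bernoulli (hp : 5 ≤ p) {n : ℕ} (hn : 4 ≤ n) (he : Even n)
    (hd : p - 1 ∣ n - 2) (hpn : ¬ p ∣ n) : exp (-1) < ν (bernoulli n) := by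
  have hν2 : ν 2 = 1 := by
    exact_mod_cast padicValuation_natCast_eq_one fun h => by have := Nat.le_of_dvd two_pos h; omega
  set S := ∑ i ∈ range p, (i : ℤ) ^ n
  set W := ∑ i ∈ range p with p < 2 * i, (i : ℤ) ^ (n - 1)
  have hW : ν (W : ℚ) = 1 := padicValuation_sum_filter_pow_eq_one (by omega) (by omega) hd
  -- If `p ∣ B_n` then `p² ∣ S`, so Voronoi's congruence gives `p² ∣ n 2^(n-1) p W`: impossible.
  by_contra! hB
  have hS : ν (S : ℚ) ≤ exp (-2) := by
    rw [← sub_add_cancel (S : ℚ) (bernoulli n * p)]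
    refine Valuation.map_add_le _ ?_ ?_
    · push_cast [S]
      exact padicValuation_sum_range_prime_pow_sub_le (by omega) hn he
    · rw [map_mul, Rat.padicValuation_self]
      calc ν (bernoulli n) * exp (-1) ≤ exp (-1) * exp (-1) := by gcongr
        _ = exp (-2) := by rw [← exp_add]; norm_num
  have hV : ν ((2 ^ n - 1) * (S : ℚ) - n * 2 ^ (n - 1) * p * W) ≤ exp (-2) := by
    have := padicValuation_le_exp_neg_of_pow_dvd
      (sq_dvd_two_pow_sub_one_mul_sum_range_pow_sub
        ((Fact.out : p.Prime).odd_of_ne_two (by omega)) n)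
    simpa only [Int.cast_sub, Int.cast_mul, Int.cast_pow, Int.cast_natCast, Int.cast_ofNat,
      Int.cast_one, Nat.cast_ofNat] using this
  have hcoef : ν ((2 : ℚ) ^ n - 1) ≤ 1 := by
    exact_mod_cast padicValuation_intCast_le_one (2 ^ n - 1)
  have hle : ν ((n : ℚ) * 2 ^ (n - 1) * p * W) ≤ exp (-2) := by
    rw [show (n : ℚ) * 2 ^ (n - 1) * p * W =
      (2 ^ n - 1) * S - ((2 ^ n - 1) * S - n * 2 ^ (n - 1) * p * W) by ring]
    refine Valuation.map_sub_le _ ?_ hV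
    rw [map_mul]
    exact (mul_le_of_le_one_left' hcoef).trans hS
  rw [map_mul, map_mul, map_mul, map_pow, padicValuation_natCast_eq_one hpn, hν2, hW,
    Rat.padicValuation_self, one_pow, one_mul, one_mul, mul_one, exp_le_exp] at hle
  norm_num at hle

lemma padicValuation_sum_range_sq_le_iff {m : ℕ} (hm : m ≠ 0) (hpm : p ∣ m) :
    ν (∑ k ∈ range m, (k : ℚ) ^ 2) ≤ ν m ^ 3 ↔ ν (bernoulli 2) ≤ ν m ^ 2 := by
  have hμ1 : ν (m : ℚ) < 1 :=
    (padicValuation_natCast_le_exp_neg_one hpm).trans_lt exp_neg_one_lt_one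
  have hμ0 : ν (m : ℚ) ≠ 0 := by simpa using hm
  have hμ2 : ν (m : ℚ) ^ 2 < ν m := by
    rw [sq]; exact mul_lt_of_lt_one_left (zero_lt_iff.2 hμ0) hμ1
  have hμ3 : ν (m : ℚ) ^ 3 ≤ ν m ^ 2 := pow_le_pow_right_of_le_one' hμ1.le (by norm_num)
  refine iff_of_false (fun hS => ?_) (fun hB => ?_)
  · have hsq : (m : ℚ) = 6 * ∑ k ∈ range m, (k : ℚ) ^ 2 - 2 * m ^ 3 + 3 * m ^ 2 := by
      rw [six_mul_sum_range_sq]; ring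
    have hle : ν (6 * ∑ k ∈ range m, (k : ℚ) ^ 2 - 2 * m ^ 3 + 3 * m ^ 2) ≤ ν m ^ 2 := by
      refine Valuation.map_add_le _ (Valuation.map_sub_le _ ?_ ?_) ?_ <;> rw [map_mul]
      · exact (mul_le_of_le_one_left' (padicValuation_ofNat_le_one 6)).trans (hS.trans hμ3)
      · exact (mul_le_of_le_one_left' (padicValuation_ofNat_le_one 2)).trans (by rwa [map_pow])
      · exact (mul_le_of_le_one_left' (padicValuation_ofNat_le_one 3)).trans (by rw [map_pow])
    exact hμ2.not_ge ((congrArg ν hsq).trans_le hle)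
  · have h6 : ν (bernoulli 2) * ν 6 = 1 := by
      rw [← map_mul, bernoulli_two, inv_mul_cancel₀ (by norm_num), map_one]
    refine lt_irrefl (1 : ℤᵐ⁰) ?_
    calc (1 : ℤᵐ⁰) = ν (bernoulli 2) * ν 6 := h6.symm
      _ ≤ ν m ^ 2 := (mul_le_of_le_one_right' (padicValuation_ofNat_le_one 6)).trans hB
      _ < 1 := hμ2.trans hμ1

lemma sub_one_dvd_sub_two_and_not_dvd (hp : p ≠ 2) {n : ℕ} (hn : 4 ≤ n) (he : Even n)
    (hc : 1 < ν (bernoulli (n - 2)) * ν (n.choose 2 : ℚ)) : p - 1 ∣ n - 2 ∧ ¬ p ∣ n := by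
  constructor
  · by_contra hd
    have he2 : Even (n - 2) := by obtain ⟨k, rfl⟩ := he; exact ⟨k - 1, by omega⟩
    exact hc.not_ge (mul_le_one' (padicValuation_bernoulli_le_one (by omega) he2 hd)
      (padicValuation_natCast_le_one _))
  · intro hpn
    have h2C := Nat.add_one_mul_choose_eq (n - 1) 1
    rw [Nat.sub_add_cancel (by omega), Nat.choose_one_right] at h2C
    have hC : p ∣ n.choose 2 :=
      ((Nat.Prime.dvd_mul Fact.out).1 (h2C ▸ dvd_mul_of_dvd_left hpn _)).resolve_right
        fun h => hp ((Nat.prime_dvd_prime_iff_eq Fact.out Nat.prime_two).1 h)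
    refine hc.not_ge ?_
    calc _ ≤ exp 1 * exp (-1) :=
          mul_le_mul' (padicValuation_bernoulli_le _) (padicValuation_natCast_le_exp_neg_one hC)
      _ = 1 := by rw [← exp_add, add_neg_cancel, exp_zero]

lemma padicValuation_sum_range_pow_le_iff_of_dominant {m n : ℕ} (hn : 4 ≤ n) (he : Even n)
    (hm : m ≠ 0) (hpm : p ∣ m) {k : ℤ} (hk : 0 ≤ k)
    (hE : ν (faulhaberTerm m n (n - 2)) ≤ exp k * ν m ^ 3)
    (hB : exp (k - 2) < ν (bernoulli n)) :
    ν (∑ k ∈ range m, (k : ℚ) ^ n) ≤ ν m ^ 3 ↔ ν (bernoulli n) ≤ ν m ^ 2 := by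
  have hμ0 : ν (m : ℚ) ≠ 0 := by simpa using hm
  have hμ2 : ν (m : ℚ) ^ 2 ≤ exp (-2) :=
    WithZero.pow_le_exp_neg (padicValuation_natCast_le_exp_neg_one hpm) 2
  have hμ3 : ν (m : ℚ) ^ 3 ≤ exp k * ν m ^ 3 :=
    le_mul_of_one_le_left' (by rw [← exp_zero, exp_le_exp]; exact hk)
  refine Valuation.le_pow_three_iff_of_sub_lt _ hμ0 ?_
    (hμ2.trans_lt ((exp_le_exp.2 (by linarith)).trans_lt hB))
  calc _ ≤ exp k * ν m ^ 3 := padicValuation_sum_range_pow_sub_le hn he hpm hμ3 hE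
    _ = exp k * ν m ^ 2 * ν m := by rw [pow_succ, mul_assoc]
    _ ≤ exp k * exp (-2) * ν m := by gcongr
    _ < ν (bernoulli n) * ν m := by
        rw [← exp_add, ← sub_eq_add_neg]; exact mul_lt_mul_of_pos_right hB (zero_lt_iff.2 hμ0)
    _ = ν (bernoulli n * m) := (map_mul _ _ _).symm

theorem padicValuation_sum_range_pow_le_iff {m n : ℕ} (hn : 0 < n) (he : Even n) (hm : m ≠ 0)
    (hpm : p ∣ m) :
    ν (∑ k ∈ range m, (k : ℚ) ^ n) ≤ ν m ^ 3 ↔ ν (bernoulli n) ≤ ν m ^ 2 := by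
  obtain rfl | hn4 : n = 2 ∨ 4 ≤ n := by obtain ⟨k, rfl⟩ := he; omega
  · exact padicValuation_sum_range_sq_le_iff hm hpm
  by_cases hdn : p - 1 ∣ n
  · refine padicValuation_sum_range_pow_le_iff_of_dominant hn4 he hm hpm zero_le_two
      (padicValuation_faulhaberTerm_sub_two_le m (by omega)) ?_
    rw [padicValuation_bernoulli_of_sub_one_dvd hn he hdn, exp_lt_exp]; norm_num
  have hp2 : p ≠ 2 := by rintro rfl; exact hdn (one_dvd n)
  have hp3 : p ≠ 3 := by rintro rfl; exact hdn (even_iff_two_dvd.1 he)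
  have hE := padicValuation_faulhaberTerm_sub_two (p := p) m hp3 (show 2 ≤ n by omega)
  by_cases hc : ν (bernoulli (n - 2)) * ν (n.choose 2 : ℚ) ≤ 1
  · exact Valuation.le_pow_three_iff_of_sub_le _ (by simpa using hm)
      (padicValuation_sum_range_pow_sub_le hn4 he hpm le_rfl (hE ▸ mul_le_of_le_one_left' hc))
  obtain ⟨hd, hpn⟩ := sub_one_dvd_sub_two_and_not_dvd hp2 hn4 he (not_le.1 hc)
  refine padicValuation_sum_range_pow_le_iff_of_dominant hn4 he hm hpm zero_le_one ?_ ?_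
  · rw [hE]
    gcongr
    exact (mul_le_mul' (padicValuation_bernoulli_le _) (padicValuation_natCast_le_one _)).trans_eq
      (mul_one _)
  · simpa using exp_neg_one_lt_padicValuation_bernoulli
      ((Fact.out : p.Prime).five_le_of_ne_two_of_ne_three hp2 hp3) hn4 he hd hpn

end PadicValuation

/-- `m³ ∣ S_n(m) ↔ m² ∣ B_n` (in the valuation sense) for even positive `n`. -/
theorem cube_dvd_power_sum_iff (n m : ℕ) (hn : 0 < n) (hne : Even n) (hm : 0 < m) :
    (m : ℤ) ^ 3 ∣ (∑ ν ∈ Finset.range m, (ν : ℤ) ^ n) ↔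
      ∀ p : ℕ, p.Prime → p ∣ m →
        (2 * padicValNat p m : ℤ) ≤ padicValRat p (bernoulli n) := by
  have hB := bernoulli_ne_zero_of_even hn hne
  rw [Int.dvd_iff_forall_padicValuation_le (by positivity)]
  refine forall_congr' fun p => ⟨fun h hp hpm => ?_, fun h _ => ?_⟩
  · have := Fact.mk hp
    have hS :
        Rat.padicValuation p (∑ k ∈ range m, (k : ℚ) ^ n) ≤ Rat.padicValuation p m ^ 3 := by
      rw [← map_pow]; exact_mod_cast h
    exact_mod_cast (mul_padicValNat_le_padicValRat_iff hB hm.ne' 2).2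
      ((padicValuation_sum_range_pow_le_iff hn hne hm.ne' hpm).1 hS)
  · push_cast
    rw [map_pow]
    by_cases hpm : p ∣ m
    · rw [padicValuation_sum_range_pow_le_iff hn hne hm.ne' hpm,
        ← mul_padicValNat_le_padicValRat_iff hB hm.ne']
      exact_mod_cast h Fact.out hpm
    · rw [padicValuation_natCast_eq_one hpm, one_pow]
      exact_mod_cast padicValuation_intCast_le_one _
end

section
/- There exist infinitely many irregular primes, i.e., infinitely many primes p such that p divides the numerator of B_l for some even l with 2 ≤ l ≤ p - 3. -/
open Finset

namespace Irr



/-- valuation bound: `p^(padicValNat p j) ∣ j` so it's `≤ j`. -/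
lemma val_le_helper {p j : ℕ} (hp : 2 ≤ p) (hj : 0 < j) :
    p ^ padicValNat p j ≤ j :=
  Nat.le_of_dvd hj (pow_padicValNat_dvd)

lemma two_pow_ge (v : ℕ) (hv : 2 ≤ v) : v + 2 ≤ 2 ^ v := by
  induction v with
  | zero => omega
  | succ n ih =>
    rcases Nat.lt_or_ge n 2 with h | h
    · interval_cases n <;> omega
    · have := ih h; have : 2^n ≥ n + 2 := this
      have h2 : 2 ^ (n+1) = 2 * 2^n := by ring
      omega

lemma five_pow_ge (v : ℕ) (hv : 1 ≤ v) : v + 3 ≤ 5 ^ v := by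
  induction v with
  | zero => omega
  | succ n ih =>
    rcases Nat.eq_zero_or_pos n with h | h
    · subst h; norm_num
    · have := ih h
      have h2 : 5 ^ (n+1) = 5 * 5^n := by ring
      omega

/-- `v_p(j) ≤ j - 1` for `j ≥ 1`. -/
lemma padicValNat_le_sub_one {p j : ℕ} (hp : p.Prime) (hj : 1 ≤ j) :
    padicValNat p j ≤ j - 1 := by
  set v := padicValNat p j with hv
  rcases Nat.eq_zero_or_pos v with h | h
  · omega
  · have h1 : 2 ^ v ≤ p ^ v := Nat.pow_le_pow_left hp.two_le v
    have h2 : p ^ v ≤ j := val_le_helper hp.two_le (by omega)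
    have h3 : v + 1 ≤ 2 ^ v := by
      rcases Nat.lt_or_ge v 2 with h' | h'
      · interval_cases v <;> norm_num
      · have := two_pow_ge v h'; omega
    omega

/-- `v_p(j) ≤ j - 2` for `j ≥ 3`. -/
lemma padicValNat_le_sub_two {p j : ℕ} (hp : p.Prime) (hj : 3 ≤ j) :
    padicValNat p j ≤ j - 2 := by
  set v := padicValNat p j with hv
  rcases Nat.lt_or_ge v 2 with h | h
  · omega
  · have h1 : 2 ^ v ≤ p ^ v := Nat.pow_le_pow_left hp.two_le v
    have h2 : p ^ v ≤ j := val_le_helper hp.two_le (by omega)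
    have h3 := two_pow_ge v h
    omega

/-- `v_p(j) ≤ j - 3` for `j ≥ 3`, `p ≥ 5`. -/
lemma padicValNat_le_sub_three {p j : ℕ} (hp : p.Prime) (hp5 : 5 ≤ p) (hj : 3 ≤ j) :
    padicValNat p j ≤ j - 3 := by
  set v := padicValNat p j with hv
  rcases Nat.eq_zero_or_pos v with h | h
  · omega
  · have h1 : 5 ^ v ≤ p ^ v := Nat.pow_le_pow_left hp5 v
    have h2 : p ^ v ≤ j := val_le_helper hp.two_le (by omega)
    have h3 := five_pow_ge v h
    omega



lemma choose_aux {n i : ℕ} (h : i ≤ n) :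
    (n + 1 - i) * (n + 1).choose i = (n + 1) * n.choose i := by
  have h1 := Nat.add_one_mul_choose_eq n (n - i)
  have h2 : n.choose (n - i) = n.choose i := Nat.choose_symm h
  have h3 : (n + 1).choose (n + 1 - i) = (n + 1).choose i := by
    have := Nat.choose_symm (n := n + 1) (k := i) (by omega)
    simpa using this
  have h4 : n - i + 1 = n + 1 - i := by omega
  rw [h2, h4, h3] at h1
  rw [h1, Nat.mul_comm]

/-- Faulhaber's formula, rearranged. -/
lemma faulhaber (M n : ℕ) :
    (∑ k ∈ range M, (k : ℚ) ^ n) =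
      (∑ i ∈ range n, bernoulli i * (n.choose i) * (M : ℚ) ^ (n + 1 - i) / ((n + 1 - i : ℕ) : ℚ))
        + (M : ℚ) * bernoulli n := by
  rw [_root_.sum_range_pow M n]
  rw [Finset.sum_range_succ]
  congr 1
  · apply Finset.sum_congr rfl
    intro i hi
    rw [Finset.mem_range] at hi
    have h1 : ((n + 1 - i : ℕ) : ℚ) ≠ 0 := by
      have : 0 < n + 1 - i := by omega
      exact_mod_cast this.ne'
    have h2 : ((n : ℚ) + 1) ≠ 0 := by positivity
    have key : ((n + 1 - i : ℕ) : ℚ) * ((n + 1).choose i : ℚ) = ((n : ℚ) + 1) * (n.choose i : ℚ) := by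
      exact_mod_cast congrArg (Nat.cast : ℕ → ℚ) (choose_aux hi.le)
    rw [div_eq_div_iff h2 h1]
    linear_combination bernoulli i * (M : ℚ) ^ (n + 1 - i) * key
  · have h2 : ((n : ℚ) + 1) ≠ 0 := by positivity
    rw [Nat.choose_succ_self_right, Nat.add_sub_cancel_left, pow_one]
    push_cast
    field_simp


section S123
variable {p : ℕ} [hp : Fact p.Prime]

lemma norm_natCast (j : ℕ) (hj : j ≠ 0) :
    ‖(j : ℚ_[p])‖ = (p : ℝ) ^ (-(padicValNat p j : ℤ)) := by
  have h1 : ((j : ℚ_[p])) = (((j : ℚ)) : ℚ_[p]) := by norm_cast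
  rw [h1, Padic.eq_padicNorm,
    padicNorm.eq_zpow_of_nonzero (by exact_mod_cast hj),
    padicValRat.of_nat]
  push_cast
  norm_num

lemma norm_nat_le_one (j : ℕ) : ‖(j : ℚ_[p])‖ ≤ 1 := by
  have := Padic.norm_int_le_one (p := p) (j : ℤ)
  simpa using this

lemma norm_pow_div_le (c t j : ℕ) (hj : j ≠ 0) (h : padicValNat p j + t ≤ c) :
    ‖(p : ℚ_[p]) ^ c / (j : ℚ_[p])‖ ≤ (p : ℝ) ^ (-(t : ℤ)) := by
  rw [norm_div, Padic.norm_p_pow, norm_natCast j hj, ← zpow_sub₀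
    (by exact_mod_cast hp.out.pos.ne' : ((p:ℝ)) ≠ 0)]
  apply zpow_le_zpow_right₀
  · exact_mod_cast hp.out.one_lt.le
  · omega

lemma norm_sum_le_max {ι : Type*} (s : Finset ι) (f : ι → ℚ_[p]) {c : ℝ} (hc : 0 ≤ c)
    (h : ∀ i ∈ s, ‖f i‖ ≤ c) : ‖∑ i ∈ s, f i‖ ≤ c := by
  induction s using Finset.cons_induction with
  | empty => simpa using hc
  | cons a s ha ih =>
    rw [Finset.sum_cons]
    refine le_trans (Padic.nonarchimedean _ _) (max_le ?_ ?_)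
    · exact h a (Finset.mem_cons_self a s)
    · exact ih fun i hi => h i (Finset.mem_cons_of_mem hi)

lemma norm_sub_le_max (a b : ℚ_[p]) : ‖a - b‖ ≤ max ‖a‖ ‖b‖ := by
  rw [sub_eq_add_neg]
  refine le_trans (Padic.nonarchimedean _ _) ?_
  rw [norm_neg]

end S123

lemma bern_odd_zero {k : ℕ} (hk : Odd k) (h1 : 1 < k) : bernoulli k = 0 := by
  rw [bernoulli_eq_bernoulli'_of_ne_one (by omega)]
  exact bernoulli'_eq_zero_of_odd hk h1

section S4
variable {p : ℕ} [hp : Fact p.Prime]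

lemma faulhaber_padic (n : ℕ) :
    ((∑ k ∈ range p, k ^ n : ℕ) : ℚ_[p]) =
      (∑ i ∈ range n, ((bernoulli i : ℚ) : ℚ_[p]) * ((n.choose i : ℕ) : ℚ_[p]) *
        (p : ℚ_[p]) ^ (n + 1 - i) / ((n + 1 - i : ℕ) : ℚ_[p]))
        + (p : ℚ_[p]) * ((bernoulli n : ℚ) : ℚ_[p]) := by
  have h := congrArg (fun q : ℚ => (q : ℚ_[p])) (faulhaber p n)
  push_cast at h ⊢
  exact h

lemma termB1 {i n t : ℕ} (hi : i < n)
    (hBi : ‖(p : ℚ_[p]) * ((bernoulli i : ℚ) : ℚ_[p])‖ ≤ 1)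
    (ht : padicValNat p (n + 1 - i) + t ≤ n - i) :
    ‖((bernoulli i : ℚ) : ℚ_[p]) * ((n.choose i : ℕ) : ℚ_[p]) * (p : ℚ_[p]) ^ (n + 1 - i) /
      ((n + 1 - i : ℕ) : ℚ_[p])‖ ≤ (p : ℝ) ^ (-(t : ℤ)) := by
  have hexp : (p : ℚ_[p]) ^ (n + 1 - i) = (p : ℚ_[p]) * (p : ℚ_[p]) ^ (n - i) := by
    rw [← pow_succ']
    congr 1
    omega
  have heq : ((bernoulli i : ℚ) : ℚ_[p]) * ((n.choose i : ℕ) : ℚ_[p]) * (p : ℚ_[p]) ^ (n + 1 - i) /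
      ((n + 1 - i : ℕ) : ℚ_[p]) =
      ((p : ℚ_[p]) * ((bernoulli i : ℚ) : ℚ_[p])) * ((n.choose i : ℕ) : ℚ_[p]) *
        ((p : ℚ_[p]) ^ (n - i) / ((n + 1 - i : ℕ) : ℚ_[p])) := by
    rw [hexp]; ring
  rw [heq, Padic.padicNormE.mul, Padic.padicNormE.mul]
  calc ‖(p : ℚ_[p]) * ((bernoulli i : ℚ) : ℚ_[p])‖ * ‖((n.choose i : ℕ) : ℚ_[p])‖ *
        ‖(p : ℚ_[p]) ^ (n - i) / ((n + 1 - i : ℕ) : ℚ_[p])‖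
      ≤ 1 * 1 * ((p : ℝ) ^ (-(t : ℤ))) := by
        refine mul_le_mul (mul_le_mul hBi (norm_nat_le_one _) (norm_nonneg _) (by linarith [norm_nonneg ((p : ℚ_[p]) * ((bernoulli i : ℚ) : ℚ_[p]))])) ?_ (norm_nonneg _) (by norm_num)
        exact norm_pow_div_le _ _ _ (by omega) ht
    _ = (p : ℝ) ^ (-(t : ℤ)) := by ring

lemma A1 (n : ℕ) : ‖(p : ℚ_[p]) * ((bernoulli n : ℚ) : ℚ_[p])‖ ≤ 1 := by
  induction n using Nat.strong_induction_on with
  | _ n ih =>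
    have h := faulhaber_padic (p := p) n
    have h2 : (p : ℚ_[p]) * ((bernoulli n : ℚ) : ℚ_[p]) =
        ((∑ k ∈ range p, k ^ n : ℕ) : ℚ_[p]) -
        (∑ i ∈ range n, ((bernoulli i : ℚ) : ℚ_[p]) * ((n.choose i : ℕ) : ℚ_[p]) *
          (p : ℚ_[p]) ^ (n + 1 - i) / ((n + 1 - i : ℕ) : ℚ_[p])) := by
      rw [h]; ring
    rw [h2]
    refine le_trans (norm_sub_le_max _ _) (max_le (norm_nat_le_one _) ?_)
    refine norm_sum_le_max _ _ (by norm_num) fun i hi => ?_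
    rw [Finset.mem_range] at hi
    have := termB1 (p := p) hi (ih i hi) (t := 0)
      (by have := padicValNat_le_sub_one hp.out (j := n + 1 - i) (by omega); omega)
    simpa using this

lemma A2 {n : ℕ} (hn : Even n) (h4 : 4 ≤ n) :
    ‖(p : ℚ_[p]) * ((bernoulli n : ℚ) : ℚ_[p]) - ((∑ k ∈ range p, k ^ n : ℕ) : ℚ_[p])‖
      ≤ (p : ℝ) ^ (-1 : ℤ) := by
  have h := faulhaber_padic (p := p) n
  have h2 : (p : ℚ_[p]) * ((bernoulli n : ℚ) : ℚ_[p]) - ((∑ k ∈ range p, k ^ n : ℕ) : ℚ_[p]) =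
      -(∑ i ∈ range n, ((bernoulli i : ℚ) : ℚ_[p]) * ((n.choose i : ℕ) : ℚ_[p]) *
        (p : ℚ_[p]) ^ (n + 1 - i) / ((n + 1 - i : ℕ) : ℚ_[p])) := by
    rw [h]; ring
  rw [h2, norm_neg]
  refine norm_sum_le_max _ _ (by positivity) fun i hi => ?_
  rw [Finset.mem_range] at hi
  rcases eq_or_lt_of_le (Nat.lt_iff_add_one_le.mp hi) with heq | hlt
  · -- i = n - 1
    have hi' : i = n - 1 := by omega
    have : bernoulli i = 0 := by
      apply bern_odd_zero
      · rw [hi']; exact Nat.Even.sub_odd (by omega) hn (by norm_num)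
      · omega
    rw [this]
    simp
  · -- i ≤ n - 2, so j = n + 1 - i ≥ 3
    have h3 : 3 ≤ n + 1 - i := by omega
    exact termB1 hi (A1 i) (t := 1)
      (by have := padicValNat_le_sub_two hp.out h3; omega)

lemma A3 {n : ℕ} (hn : Even n) (h2n : 2 ≤ n) (hp5 : 5 ≤ p) :
    ‖(p : ℚ_[p]) * ((bernoulli n : ℚ) : ℚ_[p]) - ((∑ k ∈ range p, k ^ n : ℕ) : ℚ_[p])‖
      ≤ (p : ℝ) ^ (-2 : ℤ) := by
  have h := faulhaber_padic (p := p) n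
  have h2 : (p : ℚ_[p]) * ((bernoulli n : ℚ) : ℚ_[p]) - ((∑ k ∈ range p, k ^ n : ℕ) : ℚ_[p]) =
      -(∑ i ∈ range n, ((bernoulli i : ℚ) : ℚ_[p]) * ((n.choose i : ℕ) : ℚ_[p]) *
        (p : ℚ_[p]) ^ (n + 1 - i) / ((n + 1 - i : ℕ) : ℚ_[p])) := by
    rw [h]; ring
  rw [h2, norm_neg]
  refine norm_sum_le_max _ _ (by positivity) fun i hi => ?_
  rw [Finset.mem_range] at hi
  rcases eq_or_lt_of_le (Nat.lt_iff_add_one_le.mp hi) with heq | hlt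
  · -- i = n - 1, j = 2
    have hi' : i = n - 1 := by omega
    have hj : n + 1 - i = 2 := by omega
    have hBle : ‖((bernoulli i : ℚ) : ℚ_[p])‖ ≤ 1 := by
      rcases eq_or_lt_of_le h2n with h2' | h2'
      · have : i = 1 := by omega
        rw [this, bernoulli_one]
        have : (((-1 / 2 : ℚ)) : ℚ_[p]) = -(((2 : ℕ) : ℚ_[p]))⁻¹ := by push_cast; ring
        rw [this, norm_neg, norm_inv, norm_natCast 2 (by norm_num),
          padicValNat.eq_zero_of_not_dvd (fun h => by have := Nat.le_of_dvd (by norm_num) h; omega)]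
        norm_num
      · have : bernoulli i = 0 := by
          apply bern_odd_zero
          · rw [hi']; exact Nat.Even.sub_odd (by omega) hn (by norm_num)
          · omega
        rw [this]
        simp
    have h2v : padicValNat p (n + 1 - i) = 0 := by
      rw [hj]; exact padicValNat.eq_zero_of_not_dvd (fun h => by have := Nat.le_of_dvd (by norm_num) h; omega)
    calc ‖((bernoulli i : ℚ) : ℚ_[p]) * ((n.choose i : ℕ) : ℚ_[p]) * (p : ℚ_[p]) ^ (n + 1 - i) /
          ((n + 1 - i : ℕ) : ℚ_[p])‖
        = ‖((bernoulli i : ℚ) : ℚ_[p])‖ * ‖((n.choose i : ℕ) : ℚ_[p])‖ *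
          ‖(p : ℚ_[p]) ^ (n + 1 - i) / ((n + 1 - i : ℕ) : ℚ_[p])‖ := by
          rw [mul_div_assoc, Padic.padicNormE.mul, Padic.padicNormE.mul]
      _ ≤ 1 * 1 * ((p : ℝ) ^ (-2 : ℤ)) := by
          refine mul_le_mul (mul_le_mul hBle (norm_nat_le_one _) (norm_nonneg _) (by linarith [norm_nonneg (((bernoulli i : ℚ) : ℚ_[p]))])) ?_ (norm_nonneg _) (by norm_num)
          have := norm_pow_div_le (p := p) (n + 1 - i) 2 (n + 1 - i) (by omega) (by omega)
          exact this
      _ = (p : ℝ) ^ (-2 : ℤ) := by ring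
  · have h3 : 3 ≤ n + 1 - i := by omega
    exact termB1 hi (A1 i) (t := 2)
      (by have := padicValNat_le_sub_three hp.out hp5 h3; omega)

end S4

variable {p : ℕ} [hp : Fact p.Prime]

lemma zmod_sum {M : Type*} [AddCommMonoid M] (F : ZMod p → M) :
    ∑ j ∈ range p, F ((j : ℕ) : ZMod p) = ∑ x : ZMod p, F x := by
  have : NeZero p := ⟨hp.out.pos.ne'⟩
  refine Finset.sum_nbij' (fun j => ((j : ℕ) : ZMod p)) (fun x => x.val) ?_ ?_ ?_ ?_ ?_
  · intro a _; exact Finset.mem_univ _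
  · intro x _; exact Finset.mem_range.mpr (ZMod.val_lt x)
  · intro a ha; exact ZMod.val_natCast_of_lt (Finset.mem_range.mp ha)
  · intro x _; exact ZMod.natCast_rightInverse x
  · intro a _; rfl

/-- sum of `n`-th powers over `range p` mod `p`. -/
lemma sum_pow_mod (n : ℕ) (hn : 1 ≤ n) :
    ((∑ k ∈ range p, k ^ n : ℕ) : ZMod p) = if (p - 1) ∣ n then -1 else 0 := by
  classical
  have : NeZero p := ⟨hp.out.pos.ne'⟩
  push_cast
  rw [zmod_sum (fun x : ZMod p => x ^ n)]
  -- sum over all elements = sum over units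
  have hcard : Fintype.card (ZMod p) = p := ZMod.card p
  have key : ∑ x : ZMod p, x ^ n = ∑ x : (ZMod p)ˣ, ((x : ZMod p)) ^ n := by
    let φ : (ZMod p)ˣ ↪ ZMod p := ⟨fun x => x, Units.val_injective⟩
    have himg : univ.map φ = univ \ {0} := by
      ext x
      simp only [mem_map, mem_univ, Function.Embedding.coeFn_mk, true_and, mem_sdiff,
        mem_singleton, φ]
      exact isUnit_iff_ne_zero
    have h0 : ∑ x ∈ univ \ {0}, (x : ZMod p) ^ n = ∑ x : ZMod p, x ^ n := by
      rw [Finset.sum_sdiff_eq_sub (Finset.subset_univ _)]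
      simp [zero_pow (by omega : n ≠ 0)]
    rw [← h0, ← himg, Finset.sum_map]
    rfl
  rw [key]
  have := FiniteField.sum_pow_units (ZMod p) n
  rw [hcard] at this
  simpa using this

/-- binomial congruence: `(x+c)^n ≡ x^n + n x^(n-1) c mod c^2`. -/
lemma sq_dvd_pow_sub (x c : ℤ) : ∀ n : ℕ, (c ^ 2) ∣ ((x + c) ^ n - x ^ n - n * x ^ (n - 1) * c)
  | 0 => by simp
  | 1 => by simp
  | (n + 2) => by
    obtain ⟨k, hk⟩ := sq_dvd_pow_sub x c (n + 1)
    refine ⟨x * k + ((n + 1 : ℕ) : ℤ) * x ^ n + c * k, ?_⟩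
    have h1 : (n + 1 : ℕ) - 1 = n := by omega
    have h2 : (n + 2 : ℕ) - 1 = n + 1 := by omega
    rw [h1] at hk
    rw [h2]
    push_cast at hk ⊢
    linear_combination (x + c) * hk

/-- permutation of residues under multiplication by a unit. -/
lemma sum_mod_perm {M : Type*} [AddCommMonoid M] (f : ℕ → M) (a : ℕ) (ha : ¬ p ∣ a) :
    ∑ j ∈ range p, f ((j * a) % p) = ∑ j ∈ range p, f j := by
  have : NeZero p := ⟨hp.out.pos.ne'⟩
  have ha' : ((a : ℕ) : ZMod p) ≠ 0 := by
    rw [Ne, ZMod.natCast_eq_zero_iff]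
    exact ha
  have h1 : ∀ j : ℕ, (j * a) % p = (((j : ℕ) : ZMod p) * ((a : ℕ) : ZMod p)).val := by
    intro j
    rw [← Nat.cast_mul, ZMod.val_natCast]
  calc ∑ j ∈ range p, f ((j * a) % p)
      = ∑ j ∈ range p, f ((((j : ℕ) : ZMod p) * ((a : ℕ) : ZMod p)).val) := by
        refine Finset.sum_congr rfl fun j _ => ?_
        rw [h1 j]
    _ = ∑ x : ZMod p, f ((x * ((a : ℕ) : ZMod p)).val) :=
        zmod_sum (fun x : ZMod p => f ((x * ((a : ℕ) : ZMod p)).val))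
    _ = ∑ x : ZMod p, f (x.val) :=
        Fintype.sum_equiv (Equiv.mulRight₀ _ ha') _ _ (fun x => rfl)
    _ = ∑ j ∈ range p, f (((j : ℕ) : ZMod p).val) :=
        (zmod_sum (fun x : ZMod p => f x.val)).symm
    _ = ∑ j ∈ range p, f j := by
        refine Finset.sum_congr rfl fun j hj => ?_
        rw [ZMod.val_natCast_of_lt (Finset.mem_range.mp hj)]

/-- Voronoi-type integer congruence. -/
lemma voronoi (n a : ℕ) (ha : ¬ p ∣ a) :
    ((p : ℤ) ^ 2) ∣ (((a : ℤ) ^ n - 1) * (∑ j ∈ range p, (j : ℤ) ^ n) -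
      (n : ℤ) * (a : ℤ) ^ (n - 1) * (p : ℤ) *
        (∑ j ∈ range p, (j : ℤ) ^ (n - 1) * (((j * a) / p : ℕ) : ℤ))) := by
  have key : ((p : ℤ) ^ 2) ∣ ∑ j ∈ range p,
      ((((j * a) % p : ℕ) : ℤ) ^ n - ((j : ℤ) * a) ^ n +
        (n : ℤ) * ((j : ℤ) * a) ^ (n - 1) * (p : ℤ) * (((j * a) / p : ℕ) : ℤ)) := by
    refine Finset.dvd_sum fun j _ => ?_
    have hmod := Nat.div_add_mod (j * a) p
    have hZ : (p : ℤ) * (((j * a) / p : ℕ) : ℤ) + (((j * a) % p : ℕ) : ℤ) = (j : ℤ) * a := by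
      exact_mod_cast congrArg (Nat.cast : ℕ → ℤ) hmod
    have hr : (((j * a) % p : ℕ) : ℤ) = (j : ℤ) * a + -((p : ℤ) * (((j * a) / p : ℕ) : ℤ)) := by
      linarith
    obtain ⟨k, hk⟩ := sq_dvd_pow_sub ((j : ℤ) * a) (-((p : ℤ) * (((j * a) / p : ℕ) : ℤ))) n
    rw [← hr] at hk
    refine ⟨(((j * a) / p : ℕ) : ℤ) ^ 2 * k, ?_⟩
    linear_combination hk
  have hperm : ∑ j ∈ range p, (((j * a) % p : ℕ) : ℤ) ^ n = ∑ j ∈ range p, (j : ℤ) ^ n := by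
    have := sum_mod_perm (p := p) (fun m => ((m : ℕ) : ℤ) ^ n) a ha
    simpa using this
  have hsum : ∑ j ∈ range p,
      ((((j * a) % p : ℕ) : ℤ) ^ n - ((j : ℤ) * a) ^ n +
        (n : ℤ) * ((j : ℤ) * a) ^ (n - 1) * (p : ℤ) * (((j * a) / p : ℕ) : ℤ)) =
      -((((a : ℤ) ^ n - 1) * (∑ j ∈ range p, (j : ℤ) ^ n) -
      (n : ℤ) * (a : ℤ) ^ (n - 1) * (p : ℤ) *
        (∑ j ∈ range p, (j : ℤ) ^ (n - 1) * (((j * a) / p : ℕ) : ℤ)))) := by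
    have hA : ∑ j ∈ range p, ((j : ℤ) * a) ^ n = (a : ℤ) ^ n * ∑ j ∈ range p, (j : ℤ) ^ n := by
      rw [Finset.mul_sum]
      exact Finset.sum_congr rfl fun j _ => by ring
    have hB : ∑ j ∈ range p, (n : ℤ) * ((j : ℤ) * a) ^ (n - 1) * (p : ℤ) * (((j * a) / p : ℕ) : ℤ)
        = (n : ℤ) * (a : ℤ) ^ (n - 1) * (p : ℤ) *
          ∑ j ∈ range p, (j : ℤ) ^ (n - 1) * (((j * a) / p : ℕ) : ℤ) := by
      rw [Finset.mul_sum]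
      exact Finset.sum_congr rfl fun j _ => by ring
    rw [Finset.sum_add_distrib, Finset.sum_sub_distrib, hperm, hA, hB]
    ring
  rw [hsum] at key
  exact (dvd_neg).mp key


section Vcong
variable {p : ℕ} [hp : Fact p.Prime]

/-- Fermat: the Voronoi sums for exponents congruent mod `p-1` agree mod `p`. -/
lemma V_cong (a : ℕ) {n m : ℕ} (hm : 2 ≤ m) (hmn : m ≤ n) (hdvd : (p - 1) ∣ (n - m)) :
    (p : ℤ) ∣ (∑ j ∈ range p, (j : ℤ) ^ (n - 1) * (((j * a) / p : ℕ) : ℤ)) -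
      (∑ j ∈ range p, (j : ℤ) ^ (m - 1) * (((j * a) / p : ℕ) : ℤ)) := by
  have : NeZero p := ⟨hp.out.pos.ne'⟩
  obtain ⟨t, ht⟩ := hdvd
  rw [← ZMod.intCast_zmod_eq_zero_iff_dvd]
  push_cast
  rw [sub_eq_zero]
  refine Finset.sum_congr rfl fun j hj => ?_
  rcases Nat.eq_zero_or_pos j with h0 | h0
  · subst h0
    push_cast
    rw [zero_pow (by omega : n - 1 ≠ 0), zero_pow (by omega : m - 1 ≠ 0)]
  · have hj' : ((j : ℕ) : ZMod p) ≠ 0 := by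
      rw [Ne, ZMod.natCast_eq_zero_iff]
      intro hd
      have := Nat.le_of_dvd h0 hd
      have := Finset.mem_range.mp hj
      omega
    have hexp : n - 1 = (m - 1) + (p - 1) * t := by omega
    rw [hexp, pow_add, pow_mul, ZMod.pow_card_sub_one_eq_one hj', one_pow, mul_one]

end Vcong

/-- `(2π)^n < 2·n!` for `n ≥ 16`. -/
lemma two_pi_pow_lt (n : ℕ) (hn : 16 ≤ n) : (2 * Real.pi) ^ n < 2 * (n.factorial : ℝ) := by
  induction n with
  | zero => omega
  | succ k ih =>
    rcases Nat.lt_or_ge k 16 with hk | hk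
    · have hk' : k + 1 = 16 := by omega
      rw [hk']
      have hpi : 2 * Real.pi < 6.3 := by
        have := Real.pi_lt_d2
        linarith
      have hpos : (0 : ℝ) ≤ 2 * Real.pi := by positivity
      refine lt_trans (pow_lt_pow_left₀ hpi hpos (by norm_num)) ?_
      norm_num [Nat.factorial]
    · have ih' := ih hk
      have hpi : 2 * Real.pi < (k + 1 : ℝ) := by
        have := Real.pi_lt_d2
        have : (16 : ℝ) ≤ k := by exact_mod_cast hk
        linarith
      have hpos : (0 : ℝ) < 2 * Real.pi := by positivity
      calc (2 * Real.pi) ^ (k + 1) = (2 * Real.pi) ^ k * (2 * Real.pi) := by ring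
        _ < (2 * (k.factorial : ℝ)) * (k + 1 : ℝ) := by
            apply mul_lt_mul' (le_of_lt ih') hpi (le_of_lt hpos)
            positivity
        _ = 2 * ((k + 1).factorial : ℝ) := by
            rw [Nat.factorial_succ]
            push_cast
            ring

/-- even Bernoulli numbers of large index have absolute value `> 1`. -/
lemma one_lt_abs_bernoulli {n : ℕ} (hn : Even n) (h16 : 16 ≤ n) :
    1 < |bernoulli n| := by
  obtain ⟨k, hk⟩ := hn
  have hk' : n = 2 * k := by omega
  have hk0 : k ≠ 0 := by omega
  have hs := hasSum_zeta_nat hk0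
  rw [← hk'] at hs
  set L := (-1 : ℝ) ^ (k + 1) * (2 : ℝ) ^ (n - 1) * Real.pi ^ n * (bernoulli n : ℝ) / (n.factorial : ℝ) with hLdef
  have hL1 : (1 : ℝ) ≤ L := by
    have := le_hasSum hs 1 (fun i _ => by positivity)
    simpa using this
  have hfact : (0 : ℝ) < (n.factorial : ℝ) := by positivity
  have habs : |L| = (2 : ℝ) ^ (n - 1) * Real.pi ^ n * |(bernoulli n : ℝ)| / (n.factorial : ℝ) := by
    rw [hLdef]
    rw [abs_div, abs_mul, abs_mul, abs_mul]
    rw [abs_pow, abs_pow, abs_pow, abs_neg, abs_one, one_pow, one_mul,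
      abs_of_pos Real.pi_pos, abs_of_pos (by norm_num : (0:ℝ) < 2), abs_of_pos hfact]
  have hLabs : (1 : ℝ) ≤ |L| := le_trans hL1 (le_abs_self L)
  rw [habs] at hLabs
  have hkey : (n.factorial : ℝ) ≤ (2 : ℝ) ^ (n - 1) * Real.pi ^ n * |(bernoulli n : ℝ)| := by
    rw [le_div_iff₀ hfact] at hLabs
    linarith [hLabs]
  have hgrow := two_pi_pow_lt n h16
  have h2pi : (2 * Real.pi) ^ n = 2 * ((2:ℝ) ^ (n - 1) * Real.pi ^ n) := by
    rw [mul_pow]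
    have : (2:ℝ) ^ n = 2 * (2:ℝ) ^ (n - 1) := by
      rw [← pow_succ']
      congr 1
      omega
    rw [this]
    ring
  by_contra hcon
  push_neg at hcon
  have hb : |(bernoulli n : ℝ)| ≤ 1 := by
    have : |(bernoulli n : ℝ)| = ((|bernoulli n| : ℚ) : ℝ) := by
      push_cast
      rfl
    rw [this]
    exact_mod_cast hcon
  have hpipos : (0:ℝ) < (2:ℝ) ^ (n-1) * Real.pi ^ n := by positivity
  have : (n.factorial : ℝ) ≤ (2:ℝ) ^ (n-1) * Real.pi ^ n := by
    calc (n.factorial : ℝ) ≤ (2:ℝ) ^ (n-1) * Real.pi ^ n * |(bernoulli n : ℝ)| := hkey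
      _ ≤ (2:ℝ) ^ (n-1) * Real.pi ^ n * 1 := by
          exact mul_le_mul_of_nonneg_left hb (le_of_lt hpipos)
      _ = (2:ℝ) ^ (n-1) * Real.pi ^ n := by ring
  rw [h2pi] at hgrow
  linarith

/-- a prime divisor of the numerator exists. -/
lemma exists_prime_dvd_num {n : ℕ} (hn : Even n) (h16 : 16 ≤ n) :
    ∃ q : ℕ, q.Prime ∧ (q : ℤ) ∣ (bernoulli n).num := by
  have h1 := one_lt_abs_bernoulli hn h16
  set r := bernoulli n
  have hnum : r.num.natAbs ≠ 1 := by
    intro h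
    have hden : (1 : ℚ) ≤ (r.den : ℚ) := by
      exact_mod_cast r.den_pos
    have hid : ((r.num : ℚ)) = r * ((r.den : ℚ)) := by
      have h0 : ((r.den : ℚ)) ≠ 0 := by positivity
      exact (Rat.mul_den_eq_num r).symm
    have habs : ((r.num.natAbs : ℚ)) = |r| * ((r.den : ℚ)) := by
      have h1 : ((r.num.natAbs : ℚ)) = |((r.num : ℚ))| := by
        rw [Nat.cast_natAbs (α := ℚ) r.num, Int.cast_abs]
      rw [h1, hid, abs_mul, abs_of_nonneg (by positivity : (0:ℚ) ≤ (r.den : ℚ))]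
    rw [h] at habs
    have : (1 : ℚ) < |r| * ((r.den : ℚ)) := by
      calc (1:ℚ) < |r| := h1
        _ = |r| * 1 := by ring
        _ ≤ |r| * ((r.den : ℚ)) := by
            exact mul_le_mul_of_nonneg_left hden (by positivity)
    rw [← habs] at this
    norm_num at this
  obtain ⟨q, hq, hdvd⟩ := Nat.exists_prime_and_dvd hnum
  exact ⟨q, hq, Int.natCast_dvd_natCast.mpr hdvd |>.trans (Int.natAbs_dvd.mpr dvd_rfl)⟩


variable {q : ℕ} [hq : Fact q.Prime]

lemma norm_int_eq_one {z : ℤ} (h : ¬ (q : ℤ) ∣ z) : ‖(z : ℚ_[q])‖ = 1 :=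
  le_antisymm (Padic.norm_int_le_one z)
    (not_lt.mp fun hlt => h (Padic.norm_intCast_lt_one_iff.mp hlt))

lemma norm_int_le_inv {z : ℤ} (h : (q : ℤ) ∣ z) : ‖(z : ℚ_[q])‖ ≤ (q : ℝ) ^ (-1 : ℤ) := by
  have := (Padic.norm_int_le_pow_iff_dvd (p := q) z 1).mpr (by simpa using h)
  simpa using this

lemma dvd_of_norm_le {z : ℤ} (h : ‖(z : ℚ_[q])‖ ≤ (q : ℝ) ^ (-1 : ℤ)) : (q : ℤ) ∣ z := by
  have := (Padic.norm_int_le_pow_iff_dvd (p := q) z 1).mp (by simpa using h)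
  simpa using this

lemma rat_num_identity (r : ℚ) : ((r.num : ℤ) : ℚ_[q]) = (r : ℚ_[q]) * ((r.den : ℕ) : ℚ_[q]) := by
  have h0 : ((r.den : ℚ)) ≠ 0 := by
    have := r.den_pos
    positivity
  have h : ((r.num : ℚ)) = r * ((r.den : ℚ)) := by
    exact (Rat.mul_den_eq_num r).symm
  have := congrArg (fun t : ℚ => (t : ℚ_[q])) h
  push_cast at this ⊢
  exact this

lemma norm_den_eq_one {r : ℚ} (h : (q : ℤ) ∣ r.num) : ‖((r.den : ℕ) : ℚ_[q])‖ = 1 := by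
  have h1 : q ∣ r.num.natAbs := by
    have := Int.natAbs_dvd_natAbs.mpr h
    simpa using this
  apply norm_int_eq_one (z := (r.den : ℤ))
  intro h2
  have h2' : q ∣ r.den := by exact_mod_cast h2
  have h3 : q ∣ Nat.gcd r.num.natAbs r.den := Nat.dvd_gcd h1 h2'
  rw [r.reduced] at h3
  have := Nat.le_of_dvd one_pos h3
  have := hq.out.two_le
  omega

lemma norm_rat_le_of_dvd_num {r : ℚ} (h : (q : ℤ) ∣ r.num) :
    ‖(r : ℚ_[q])‖ ≤ (q : ℝ) ^ (-1 : ℤ) := by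
  have h1 := norm_int_le_inv h
  rw [rat_num_identity r, Padic.padicNormE.mul, norm_den_eq_one h, mul_one] at h1
  exact h1

lemma norm_nat_le_one' (j : ℕ) : ‖(j : ℚ_[q])‖ ≤ 1 := by
  have := Padic.norm_int_le_one (p := q) (j : ℤ)
  simpa using this

lemma dvd_num_of_norm_le {r : ℚ} (h : ‖(r : ℚ_[q])‖ ≤ (q : ℝ) ^ (-1 : ℤ)) :
    (q : ℤ) ∣ r.num := by
  apply dvd_of_norm_le
  rw [rat_num_identity r, Padic.padicNormE.mul]
  calc ‖(r : ℚ_[q])‖ * ‖((r.den : ℕ) : ℚ_[q])‖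
      ≤ ((q : ℝ) ^ (-1 : ℤ)) * 1 :=
        mul_le_mul h (norm_nat_le_one' _) (norm_nonneg _) (by positivity)
    _ = (q : ℝ) ^ (-1 : ℤ) := by ring

lemma exists_primroot : ∃ a : ℕ, ¬ q ∣ a ∧ ∀ k : ℕ, (((a : ℕ) : ZMod q) ^ k = 1 ↔ (q - 1) ∣ k) := by
  have : NeZero q := ⟨hq.out.pos.ne'⟩
  obtain ⟨g, hg⟩ := IsCyclic.exists_generator (α := (ZMod q)ˣ)
  have hord : orderOf g = q - 1 := by
    rw [orderOf_eq_card_of_forall_mem_zpowers hg, Nat.card_eq_fintype_card,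
      ZMod.card_units_eq_totient, Nat.totient_prime hq.out]
  have hval : ((((g : ZMod q)).val : ℕ) : ZMod q) = (g : ZMod q) := ZMod.natCast_rightInverse _
  refine ⟨((g : ZMod q)).val, ?_, ?_⟩
  · intro hdvd
    have h0 : ((((g : ZMod q)).val : ℕ) : ZMod q) = 0 :=
      (ZMod.natCast_eq_zero_iff _ _).mpr hdvd
    rw [hval] at h0
    exact g.ne_zero h0
  · intro k
    rw [hval]
    constructor
    · intro hk
      have : g ^ k = 1 := by
        apply Units.ext
        rw [Units.val_pow_eq_pow_val, hk, Units.val_one]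
      rw [← hord]
      exact orderOf_dvd_of_pow_eq_one this
    · intro hk
      have : g ^ k = 1 := by
        apply orderOf_dvd_iff_pow_eq_one.mp
        rw [hord]; exact hk
      have := congrArg (Units.val) this
      rw [Units.val_pow_eq_pow_val, Units.val_one] at this
      exact this


/-- Carlitz's construction: for every `x` there is an irregular prime greater than `x`. -/
lemma exists_irregular_gt (x : ℕ) :
    ∃ q : ℕ, q.Prime ∧ x < q ∧ ∃ l : ℕ, Even l ∧ 2 ≤ l ∧ l ≤ q - 3 ∧
      (q : ℤ) ∣ (bernoulli l).num := by
  classical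
  set P := (Finset.range (x + 1)).filter Nat.Prime with hP
  set N := 16 * ∏ p ∈ P, (p - 1) with hN
  have h1le : 1 ≤ ∏ p ∈ P, (p - 1) :=
    Finset.one_le_prod' fun p hp => by
      have := ((Finset.mem_filter.mp hp).2).two_le
      omega
  have hN16 : 16 ≤ N := by
    calc 16 = 16 * 1 := by ring
      _ ≤ N := Nat.mul_le_mul_left 16 h1le
  have hNeven : Even N := ⟨8 * ∏ p ∈ P, (p - 1), by rw [hN]; ring⟩
  have hdvdN : ∀ p : ℕ, p.Prime → p ≤ x → (p - 1) ∣ N := by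
    intro p hp hpx
    apply Dvd.dvd.mul_left
    exact Finset.dvd_prod_of_mem _ (Finset.mem_filter.mpr ⟨Finset.mem_range.mpr (by omega), hp⟩)
  obtain ⟨q, hqp, hqnum⟩ := exists_prime_dvd_num hNeven hN16
  haveI hqf : Fact q.Prime := ⟨hqp⟩
  have hq0R : ((q : ℝ)) ≠ 0 := by
    have := hqp.pos
    positivity
  set c := (q : ℝ) ^ (-1 : ℤ) with hc
  have hcpos : 0 < c := by positivity
  have hcc : c * c = (q : ℝ) ^ (-2 : ℤ) := by
    rw [hc, ← zpow_add₀ hq0R]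
    norm_num
  have hclt1 : c < 1 := by
    rw [hc, zpow_neg, zpow_one]
    apply inv_lt_one_of_one_lt₀
    exact_mod_cast hqp.one_lt
  have hnormB : ‖((bernoulli N : ℚ) : ℚ_[q])‖ ≤ c := norm_rat_le_of_dvd_num hqnum
  have hnormq : ‖((q : ℕ) : ℚ_[q])‖ = c := by
    rw [hc, zpow_neg, zpow_one]
    exact Padic.norm_p
  -- von Staudt–Clausen direction: q - 1 does not divide N
  have hnd : ¬ (q - 1) ∣ N := by
    intro hdvd
    have hS := sum_pow_mod (p := q) N (by omega)
    rw [if_pos hdvd] at hS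
    have hS' : (q : ℤ) ∣ ((∑ k ∈ range q, k ^ N : ℕ) : ℤ) + 1 := by
      rw [← ZMod.intCast_zmod_eq_zero_iff_dvd]
      push_cast
      push_cast at hS
      rw [hS]
      ring
    have h1 : ‖((∑ k ∈ range q, k ^ N : ℕ) : ℚ_[q]) + 1‖ ≤ c := by
      have h1' := norm_int_le_inv hS'
      rw [← hc] at h1'
      push_cast at h1' ⊢
      exact h1'
    have h2 := A2 (p := q) hNeven (by omega)
    rw [← hc] at h2
    have h3 : ‖(q : ℚ_[q]) * ((bernoulli N : ℚ) : ℚ_[q]) + 1‖ ≤ c := by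
      have heq : (q : ℚ_[q]) * ((bernoulli N : ℚ) : ℚ_[q]) + 1 =
          ((q : ℚ_[q]) * ((bernoulli N : ℚ) : ℚ_[q]) - ((∑ k ∈ range q, k ^ N : ℕ) : ℚ_[q]))
            + (((∑ k ∈ range q, k ^ N : ℕ) : ℚ_[q]) + 1) := by ring
      rw [heq]
      exact le_trans (Padic.nonarchimedean _ _) (max_le h2 h1)
    have h4 : ‖(q : ℚ_[q]) * ((bernoulli N : ℚ) : ℚ_[q])‖ = 1 := by
      have hlt : ‖(q : ℚ_[q]) * ((bernoulli N : ℚ) : ℚ_[q]) + 1‖ < ‖(1 : ℚ_[q])‖ := by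
        rw [norm_one]
        exact lt_of_le_of_lt h3 hclt1
      have := Padic.norm_eq_of_norm_add_lt_right hlt
      rw [this, norm_one]
    have h5 : ‖(q : ℚ_[q]) * ((bernoulli N : ℚ) : ℚ_[q])‖ ≤ c * c := by
      rw [Padic.padicNormE.mul, hnormq]
      exact mul_le_mul_of_nonneg_left hnormB hcpos.le
    rw [h4] at h5
    nlinarith
  have hqx : x < q := by
    by_contra h
    push_neg at h
    exact hnd (hdvdN q hqp h)
  have h2N : 2 ∣ N := ⟨8 * ∏ p ∈ P, (p - 1), by rw [hN]; ring⟩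
  have hq5 : 5 ≤ q := by
    have h2 := hqp.two_le
    have hne2 : q ≠ 2 := by
      intro h
      apply hnd
      rw [h]
      exact one_dvd N
    have hne3 : q ≠ 3 := by
      intro h
      apply hnd
      rw [h]
      exact h2N
    have hne4 : q ≠ 4 := by
      intro h
      rw [h] at hqp
      norm_num at hqp
    omega
  have hqodd : q % 2 = 1 := by
    rcases hqp.eq_two_or_odd with h | h
    · omega
    · exact h
  have hqN : ¬ q ∣ N := by
    intro h
    rw [hN] at h
    rcases (Nat.Prime.dvd_mul hqp).mp h with h16 | hprod
    · have h24 : q ∣ 2 ^ 4 := by simpa using h16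
      have := hqp.dvd_of_dvd_pow h24
      have := Nat.le_of_dvd (by norm_num) this
      omega
    · obtain ⟨p', hp'm, hp'd⟩ := hqp.prime.exists_mem_finset_dvd hprod
      obtain ⟨hp'r, hp'p⟩ := Finset.mem_filter.mp hp'm
      have hp'x : p' ≤ x := by
        have := Finset.mem_range.mp hp'r
        omega
      have : q ≤ p' - 1 := Nat.le_of_dvd (by have := hp'p.two_le; omega) hp'd
      omega
  set m := N % (q - 1) with hm
  have hmlt : m < q - 1 := Nat.mod_lt _ (by omega)
  have hm0 : m ≠ 0 := fun h => hnd (Nat.dvd_of_mod_eq_zero h)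
  have hNmod2 : N % 2 = 0 := Nat.even_iff.mp hNeven
  have hq12 : 2 ∣ (q - 1) := by omega
  have hmmod2 : m % 2 = 0 := by
    rw [hm, Nat.mod_mod_of_dvd N hq12]
    exact hNmod2
  have hmeven : Even m := Nat.even_iff.mpr hmmod2
  have hm2 : 2 ≤ m := by omega
  have hm3 : m ≤ q - 3 := by omega
  have hmN : m ≤ N := Nat.mod_le _ _
  have hdvdsub : (q - 1) ∣ (N - m) := by
    have hdm := Nat.div_add_mod N (q - 1)
    exact ⟨N / (q - 1), by omega⟩
  obtain ⟨a, haq, hagen⟩ := exists_primroot (q := q)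
  have haqZ : ¬ (q : ℤ) ∣ (a : ℤ) := by
    intro hd
    exact haq (by exact_mod_cast hd)
  have hqZp : Prime (q : ℤ) := Nat.prime_iff_prime_int.mp hqp
  have haN : ¬ (q : ℤ) ∣ ((a : ℤ) ^ N - 1) := by
    intro hd
    have h0 : (((a : ℤ) ^ N - 1 : ℤ) : ZMod q) = 0 := (ZMod.intCast_zmod_eq_zero_iff_dvd _ _).mpr hd
    push_cast at h0
    have h1 : ((a : ℕ) : ZMod q) ^ N = 1 := by linear_combination h0
    exact hnd ((hagen N).mp h1)
  have ham : ¬ (q : ℤ) ∣ ((a : ℤ) ^ m - 1) := by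
    intro hd
    have h0 : (((a : ℤ) ^ m - 1 : ℤ) : ZMod q) = 0 := (ZMod.intCast_zmod_eq_zero_iff_dvd _ _).mpr hd
    push_cast at h0
    have h1 : ((a : ℕ) : ZMod q) ^ m = 1 := by linear_combination h0
    have := Nat.le_of_dvd (by omega) ((hagen m).mp h1)
    omega
  have hnorm_apow : ∀ k : ℕ, ‖(((a : ℤ) ^ k : ℤ) : ℚ_[q])‖ = 1 := fun k =>
    norm_int_eq_one fun hd => haqZ (hqZp.dvd_of_dvd_pow hd)
  have hnormN : ‖((N : ℤ) : ℚ_[q])‖ = 1 :=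
    norm_int_eq_one fun hd => hqN (by exact_mod_cast hd)
  -- integer sums
  set SN : ℤ := ∑ j ∈ range q, (j : ℤ) ^ N with hSN
  set Sm : ℤ := ∑ j ∈ range q, (j : ℤ) ^ m with hSm
  set VN : ℤ := ∑ j ∈ range q, (j : ℤ) ^ (N - 1) * (((j * a) / q : ℕ) : ℤ) with hVN
  set Vm : ℤ := ∑ j ∈ range q, (j : ℤ) ^ (m - 1) * (((j * a) / q : ℕ) : ℤ) with hVm
  have hXN : ((∑ k ∈ range q, k ^ N : ℕ) : ℚ_[q]) = ((SN : ℤ) : ℚ_[q]) := by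
    rw [hSN]
    push_cast
    rfl
  have hXm : ((∑ k ∈ range q, k ^ m : ℕ) : ℚ_[q]) = ((Sm : ℤ) : ℚ_[q]) := by
    rw [hSm]
    push_cast
    rfl
  have hvorN := voronoi (p := q) N a haq
  have hvorm := voronoi (p := q) m a haq
  rw [← hSN, ← hVN] at hvorN
  rw [← hSm, ← hVm] at hvorm
  have hA3N := A3 (p := q) hNeven (by omega) hq5
  have hA3m := A3 (p := q) hmeven hm2 hq5
  rw [← hcc] at hA3N hA3m
  rw [hXN] at hA3N
  rw [hXm] at hA3m
  -- ‖(a^N - 1) SN‖ ≤ c²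
  have h6 : ‖(((a : ℤ) ^ N - 1 : ℤ) : ℚ_[q]) * ((SN : ℤ) : ℚ_[q])‖ ≤ c * c := by
    have heq : (((a : ℤ) ^ N - 1 : ℤ) : ℚ_[q]) * ((SN : ℤ) : ℚ_[q]) =
        (((a : ℤ) ^ N - 1 : ℤ) : ℚ_[q]) *
          (((SN : ℤ) : ℚ_[q]) - (q : ℚ_[q]) * ((bernoulli N : ℚ) : ℚ_[q]))
        + (((a : ℤ) ^ N - 1 : ℤ) : ℚ_[q]) * ((q : ℚ_[q]) * ((bernoulli N : ℚ) : ℚ_[q])) := by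
      ring
    rw [heq]
    refine le_trans (Padic.nonarchimedean _ _) (max_le ?_ ?_)
    · rw [Padic.padicNormE.mul]
      calc ‖(((a : ℤ) ^ N - 1 : ℤ) : ℚ_[q])‖ *
            ‖((SN : ℤ) : ℚ_[q]) - (q : ℚ_[q]) * ((bernoulli N : ℚ) : ℚ_[q])‖
          ≤ 1 * (c * c) := by
            refine mul_le_mul (Padic.norm_int_le_one _) ?_ (norm_nonneg _) (by norm_num)
            rw [← norm_neg]
            calc ‖-(((SN : ℤ) : ℚ_[q]) - (q : ℚ_[q]) * ((bernoulli N : ℚ) : ℚ_[q]))‖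
                = ‖(q : ℚ_[q]) * ((bernoulli N : ℚ) : ℚ_[q]) - ((SN : ℤ) : ℚ_[q])‖ := by
                  congr 1
                  ring
              _ ≤ c * c := hA3N
        _ = c * c := by ring
    · rw [Padic.padicNormE.mul, Padic.padicNormE.mul]
      calc ‖(((a : ℤ) ^ N - 1 : ℤ) : ℚ_[q])‖ * (‖((q : ℕ) : ℚ_[q])‖ * ‖((bernoulli N : ℚ) : ℚ_[q])‖)
          ≤ 1 * (c * c) := by
            refine mul_le_mul (Padic.norm_int_le_one _) ?_ (by positivity) (by norm_num)
            rw [hnormq]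
            exact mul_le_mul_of_nonneg_left hnormB hcpos.le
        _ = c * c := by ring
  -- ‖N a^(N-1) q VN‖ ≤ c²
  have h7 : ‖(((N : ℤ) * (a : ℤ) ^ (N - 1) * (q : ℤ) * VN : ℤ) : ℚ_[q])‖ ≤ c * c := by
    have heq : (((N : ℤ) * (a : ℤ) ^ (N - 1) * (q : ℤ) * VN : ℤ) : ℚ_[q]) =
        (((a : ℤ) ^ N - 1 : ℤ) : ℚ_[q]) * ((SN : ℤ) : ℚ_[q]) -
        (((((a : ℤ) ^ N - 1) * SN - (N : ℤ) * (a : ℤ) ^ (N - 1) * (q : ℤ) * VN : ℤ)) : ℚ_[q]) := by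
      push_cast
      ring
    rw [heq]
    refine le_trans (norm_sub_le_max _ _) (max_le h6 ?_)
    rw [hcc]
    have := (Padic.norm_int_le_pow_iff_dvd (p := q)
      (((a : ℤ) ^ N - 1) * SN - (N : ℤ) * (a : ℤ) ^ (N - 1) * (q : ℤ) * VN) 2).mpr
      (by push_cast; exact_mod_cast hvorN)
    exact_mod_cast this
  -- q ∣ VN
  have h8 : (q : ℤ) ∣ VN := by
    apply dvd_of_norm_le
    rw [← hc]
    have heq : (((N : ℤ) * (a : ℤ) ^ (N - 1) * (q : ℤ) * VN : ℤ) : ℚ_[q]) =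
        ((N : ℤ) : ℚ_[q]) * (((a : ℤ) ^ (N - 1) : ℤ) : ℚ_[q]) * ((q : ℕ) : ℚ_[q]) *
          ((VN : ℤ) : ℚ_[q]) := by
      push_cast
      ring
    rw [heq, Padic.padicNormE.mul, Padic.padicNormE.mul, Padic.padicNormE.mul, hnormN, hnorm_apow, hnormq,
      one_mul, one_mul] at h7
    exact le_of_mul_le_mul_left h7 hcpos
  have hVcong := V_cong (p := q) a hm2 hmN hdvdsub
  rw [← hVN, ← hVm] at hVcong
  have h9 : (q : ℤ) ∣ Vm := by
    have := dvd_sub h8 hVcong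
    simpa using this
  -- ‖(a^m - 1) Sm‖ ≤ c²
  have h10 : ‖(((a : ℤ) ^ m - 1 : ℤ) : ℚ_[q]) * ((Sm : ℤ) : ℚ_[q])‖ ≤ c * c := by
    have heq : (((a : ℤ) ^ m - 1 : ℤ) : ℚ_[q]) * ((Sm : ℤ) : ℚ_[q]) =
        (((((a : ℤ) ^ m - 1) * Sm - (m : ℤ) * (a : ℤ) ^ (m - 1) * (q : ℤ) * Vm : ℤ)) : ℚ_[q]) +
        ((m : ℤ) : ℚ_[q]) * (((a : ℤ) ^ (m - 1) : ℤ) : ℚ_[q]) * ((q : ℕ) : ℚ_[q]) *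
          ((Vm : ℤ) : ℚ_[q]) := by
      push_cast
      ring
    rw [heq]
    refine le_trans (Padic.nonarchimedean _ _) (max_le ?_ ?_)
    · rw [hcc]
      have := (Padic.norm_int_le_pow_iff_dvd (p := q)
        (((a : ℤ) ^ m - 1) * Sm - (m : ℤ) * (a : ℤ) ^ (m - 1) * (q : ℤ) * Vm) 2).mpr
        (by push_cast; exact_mod_cast hvorm)
      exact_mod_cast this
    · rw [Padic.padicNormE.mul, Padic.padicNormE.mul, Padic.padicNormE.mul, hnorm_apow, hnormq, mul_one]
      calc ‖((m : ℤ) : ℚ_[q])‖ * c * ‖((Vm : ℤ) : ℚ_[q])‖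
          ≤ 1 * c * c := by
            refine mul_le_mul (mul_le_mul (Padic.norm_int_le_one _) le_rfl hcpos.le
              (by norm_num)) ?_ (norm_nonneg _) (by positivity)
            rw [hc]
            exact norm_int_le_inv h9
        _ = c * c := by ring
  -- conclude q ∣ num (bernoulli m)
  have h11 : ‖(((a : ℤ) ^ m - 1 : ℤ) : ℚ_[q]) *
      ((q : ℚ_[q]) * ((bernoulli m : ℚ) : ℚ_[q]))‖ ≤ c * c := by
    have heq : (((a : ℤ) ^ m - 1 : ℤ) : ℚ_[q]) * ((q : ℚ_[q]) * ((bernoulli m : ℚ) : ℚ_[q])) =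
        (((a : ℤ) ^ m - 1 : ℤ) : ℚ_[q]) *
          ((q : ℚ_[q]) * ((bernoulli m : ℚ) : ℚ_[q]) - ((Sm : ℤ) : ℚ_[q]))
        + (((a : ℤ) ^ m - 1 : ℤ) : ℚ_[q]) * ((Sm : ℤ) : ℚ_[q]) := by
      ring
    rw [heq]
    refine le_trans (Padic.nonarchimedean _ _) (max_le ?_ h10)
    rw [Padic.padicNormE.mul]
    calc ‖(((a : ℤ) ^ m - 1 : ℤ) : ℚ_[q])‖ *
          ‖(q : ℚ_[q]) * ((bernoulli m : ℚ) : ℚ_[q]) - ((Sm : ℤ) : ℚ_[q])‖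
        ≤ 1 * (c * c) := by
          exact mul_le_mul (Padic.norm_int_le_one _) hA3m (norm_nonneg _) (by norm_num)
      _ = c * c := by ring
  have h12 : ‖(q : ℚ_[q]) * ((bernoulli m : ℚ) : ℚ_[q])‖ ≤ c * c := by
    rw [Padic.padicNormE.mul, norm_int_eq_one ham, one_mul] at h11
    exact h11
  have h13 : ‖((bernoulli m : ℚ) : ℚ_[q])‖ ≤ c := by
    rw [Padic.padicNormE.mul, hnormq] at h12
    exact le_of_mul_le_mul_left h12 hcpos
  have hfinal : (q : ℤ) ∣ (bernoulli m).num := by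
    apply dvd_num_of_norm_le
    rw [← hc]
    exact h13
  exact ⟨q, hqp, hqx, m, hmeven, hm2, hm3, hfinal⟩

end Irr

/-- There are infinitely many irregular primes. -/
theorem infinitely_many_irregular_primes :
    {p : ℕ | p.Prime ∧ ∃ l : ℕ, Even l ∧ 2 ≤ l ∧ l ≤ p - 3 ∧
      (p : ℤ) ∣ (bernoulli l).num}.Infinite := by
  by_contra hfin
  rw [Set.not_infinite] at hfin
  obtain ⟨x, hx⟩ := hfin.bddAbove
  obtain ⟨q, hqp, hqx, hl⟩ := Irr.exists_irregular_gt x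
  have : q ≤ x := hx ⟨hqp, hl⟩
  omega
end
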